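/- arXiv:1301.5811 — 8 statements merged into one kernel-verified Lean document; each statement's English description precedes it below -/
import Mathlib

section
/- Let d ∈ ℕ, let 𝒟 and H be complex Hilbert spaces, let U ⊆ ℝᵈ be open and connected, let Σ ⊆ ℂ be open and connected, and let P : U × Σ → L(𝒟, H) be a map into the Banach space of bounded operators that is C^∞ on U × Σ (viewed as an open subset of ℝ^{d+2}) and such that σ ↦ P(y,σ) is holomorphic on Σ for each fixed y ∈ U. Assume: (i) each P(y,σ) is Fredholm of index 0; (ii) for each y ∈ U there is σ ∈ Σ with P(y,σ) bijective; (iii) for each y ∈ U the set sing_b(y) = {σ ∈ Σ : P(y,σ) is not bijective} is finite; (iv) the set sing_e = {(y,σ) ∈ U × Σ : σ ∈ sing_b(y)} is closed as a subset of U × ℂ. Suppose U' ⊆ U is open and φ₁, …, φ_N : U' × ℂ → 𝒟 are functions such that for every y ∈ U' each φ_i(y,·) belongs to 𝒦_y, the functions φ₁(y,·), …, φ_N(y,·) form a basis of 𝒦_y, and each φ_i is C^∞ on (U' × ℂ) ∖ sing_e and holomorphic in σ off sing_b(y) for each fixed y. If ψ : U' × ℂ → 𝒟 is C^∞ on (U'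 × ℂ) ∖ sing_e, holomorphic in σ off sing_b(y) for each fixed y, and ψ(y,·) ∈ 𝒦_y for every y ∈ U', then the unique functions f₁, …, f_N : U' → ℂ satisfying ψ(y,·) = Σ_{i=1}^N f_i(y) φ_i(y,·) for all y ∈ U' are C^∞ on U'. -/
open Metric Set Complex
open Filter Topology

noncomputable section

/-- A principal part at `c ∈ ℂ` with values in a complex vector space `E`:
`φ(σ) = ∑_{k=1}^m a_k (σ - c)^{-k}` (with the convention that the value at the pole is `0`,
coming from `0⁻¹ = 0` in Lean; for `σ ≠ c` this is exactly the usual formula). -/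
def IsPrincipalPart {E : Type*} [AddCommGroup E] [Module ℂ E] (c : ℂ) (φ : ℂ → E) : Prop :=
  ∃ (m : ℕ) (a : ℕ → E), ∀ σ : ℂ, φ σ = ∑ k ∈ Finset.Icc 1 m, ((σ - c) ^ (-(k : ℤ))) • a k

/-- A singular function with poles in `S ⊆ ℂ`: a finite sum of principal parts at
finitely many points of `S`. -/
def IsSingularFunction {E : Type*} [AddCommGroup E] [Module ℂ E] (S : Set ℂ) (φ : ℂ → E) :
    Prop :=
  ∃ (F : Finset ℂ) (p : ℂ → ℂ → E), (↑F : Set ℂ) ⊆ S ∧ (∀ c ∈ F, IsPrincipalPart c (p c)) ∧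
    ∀ σ : ℂ, φ σ = ∑ c ∈ F, p c σ


lemma pp_zero {E : Type*} [AddCommGroup E] [Module ℂ E] (c : ℂ) :
    IsPrincipalPart c (fun _ : ℂ => (0 : E)) :=
  ⟨0, fun _ => 0, by simp⟩

lemma pp_smul {E : Type*} [AddCommGroup E] [Module ℂ E] {c : ℂ} {p : ℂ → E}
    (hp : IsPrincipalPart c p) (t : ℂ) : IsPrincipalPart c (fun σ => t • p σ) := by
  obtain ⟨m, a, ha⟩ := hp
  refine ⟨m, fun k => t • a k, fun σ => ?_⟩
    
  show t • p σ = _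
  rw [ha σ, Finset.smul_sum]; exact Finset.sum_congr rfl fun k _ => smul_comm _ _ _

lemma pp_add {E : Type*} [AddCommGroup E] [Module ℂ E] {c : ℂ} {p q : ℂ → E}
    (hp : IsPrincipalPart c p) (hq : IsPrincipalPart c q) :
    IsPrincipalPart c (fun σ => p σ + q σ) := by
  obtain ⟨m₁, a₁, ha₁⟩ := hp
  obtain ⟨m₂, a₂, ha₂⟩ := hq
  refine ⟨max m₁ m₂, fun k => (if k ≤ m₁ then a₁ k else 0) + (if k ≤ m₂ then a₂ k else 0),
    fun σ => ?_⟩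
  show p σ + q σ = _
  have key : ∀ (m' : ℕ) (a : ℕ → E), m' ≤ max m₁ m₂ →
      ∑ k ∈ Finset.Icc 1 (max m₁ m₂), ((σ - c) ^ (-(k : ℤ))) • (if k ≤ m' then a k else 0)
        = ∑ k ∈ Finset.Icc 1 m', ((σ - c) ^ (-(k : ℤ))) • a k := by
    intro m' a hm'
    rw [← Finset.sum_subset (Finset.Icc_subset_Icc_right hm')]
    · exact Finset.sum_congr rfl fun k hk => by
        rw [if_pos (Finset.mem_Icc.mp hk).2]
    · intro k hk hk'
      have : ¬ k ≤ m' := fun h => hk' (Finset.mem_Icc.mpr ⟨(Finset.mem_Icc.mp hk).1, h⟩)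
      rw [if_neg this, smul_zero]
  simp only [smul_add, Finset.sum_add_distrib]
  rw [key m₁ a₁ (le_max_left _ _), key m₂ a₂ (le_max_right _ _), ha₁, ha₂]

lemma pp_sum {E : Type*} [AddCommGroup E] [Module ℂ E] {c : ℂ} {ι : Type*} (s : Finset ι)
    (p : ι → ℂ → E) (hp : ∀ i ∈ s, IsPrincipalPart c (p i)) :
    IsPrincipalPart c (fun σ => ∑ i ∈ s, p i σ) := by
  classical
  induction s using Finset.induction_on with
  | empty => simpa using pp_zero c
  | insert a s hns ih =>
    simp only [Finset.sum_insert hns]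
    exact pp_add (hp a (Finset.mem_insert_self a s))
      (ih fun i hi => hp i (Finset.mem_insert_of_mem hi))

lemma pp_continuousAt {E : Type*} [NormedAddCommGroup E] [NormedSpace ℂ E] {c : ℂ} {p : ℂ → E}
    (hp : IsPrincipalPart c p) {x : ℂ} (hx : x ≠ c) : ContinuousAt p x := by
  obtain ⟨m, a, ha⟩ := hp
  have hterm : ∀ k ∈ Finset.Icc 1 m, Tendsto (fun σ : ℂ => ((σ - c) ^ (-(k : ℤ))) • a k)
      (𝓝 x) (𝓝 (((x - c) ^ (-(k : ℤ))) • a k)) := by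
    intro k _
    have hsub : ContinuousAt (fun σ : ℂ => σ - c) x := continuousAt_id.sub continuousAt_const
    have h1 : ContinuousAt (fun σ : ℂ => (σ - c) ^ (-(k : ℤ))) x :=
      hsub.zpow₀ (-(k : ℤ)) (Or.inl (sub_ne_zero.mpr hx))
    exact h1.smul (continuousAt_const : ContinuousAt (fun _ : ℂ => a k) x)
  have : ContinuousAt (fun σ => ∑ k ∈ Finset.Icc 1 m, ((σ - c) ^ (-(k : ℤ))) • a k) x :=
    tendsto_finset_sum _ hterm
  exact this.congr (by filter_upwards with σ using (ha σ).symm)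

/-- A principal part that agrees, off a finite set, with a function continuous at the pole
vanishes identically. -/
lemma pp_eq_zero {E : Type*} [NormedAddCommGroup E] [NormedSpace ℂ E] {c : ℂ} {p : ℂ → E}
    (hp : IsPrincipalPart c p) {S : Set ℂ} (hS : S.Finite) {h : ℂ → E}
    (hh : ContinuousAt h c) (heq : ∀ σ ∉ S, p σ = h σ) : ∀ σ, p σ = 0 := by
  obtain ⟨m, a, ha⟩ := hp
  have main : ∀ (m : ℕ) (a : ℕ → E),
      (∀ σ ∉ S, (∑ k ∈ Finset.Icc 1 m, ((σ - c) ^ (-(k : ℤ))) • a k) = h σ) →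
      ∀ σ : ℂ, (∑ k ∈ Finset.Icc 1 m, ((σ - c) ^ (-(k : ℤ))) • a k) = 0 := by
    intro m
    induction m with
    | zero => intro a _ σ; simp
    | succ n ih =>
      intro a hA
      -- the punctured cofinite neighborhood filter
      set l : Filter ℂ := 𝓝[(insert c S)ᶜ] c with hl
      have hdense : Dense ((insert c S)ᶜ : Set ℂ) :=
        Set.Countable.dense_compl ℂ ((hS.insert c).countable)
      have hne : l.NeBot := by
        rw [hl, ← mem_closure_iff_nhdsWithin_neBot, hdense.closure_eq]; trivial
      have hlle : l ≤ 𝓝 c := nhdsWithin_le_nhds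
      -- auxiliary continuous function
      set g : ℂ → E := fun σ => ∑ k ∈ Finset.Icc 1 (n+1), ((σ - c) ^ ((n+1) - k)) • a k with hg
      have hgc : ContinuousAt g c := by
        have hterm : ∀ k ∈ Finset.Icc 1 (n+1), Tendsto (fun σ : ℂ => ((σ - c) ^ ((n+1) - k)) • a k)
            (𝓝 c) (𝓝 (((c - c) ^ ((n+1) - k)) • a k)) := fun k _ =>
          (((continuous_id.sub continuous_const).pow _).continuousAt).smul continuousAt_const
        exact tendsto_finset_sum _ hterm
      have hgval : g c = a (n+1) := by
        rw [hg]
        simp only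
        rw [Finset.sum_eq_single (n+1)]
        · simp
        · intro k hk hkne
          have h1 : k ≤ n + 1 := (Finset.mem_Icc.mp hk).2
          have : (n + 1) - k ≠ 0 := Nat.sub_ne_zero_of_lt (lt_of_le_of_ne h1 hkne)
          rw [sub_self, zero_pow this, zero_smul]
        · intro hk; exact absurd (Finset.mem_Icc.mpr ⟨Nat.succ_le_succ (Nat.zero_le n), le_refl _⟩) hk
      -- g σ = (σ - c)^(n+1) • (sum) for σ ≠ c
      have hgeq : ∀ σ : ℂ, σ ≠ c →
          g σ = ((σ - c) ^ (n+1)) • ∑ k ∈ Finset.Icc 1 (n+1), ((σ - c) ^ (-(k : ℤ))) • a k := by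
        intro σ hσ
        have hsc : (σ - c) ≠ 0 := sub_ne_zero.mpr hσ
        rw [hg]
        simp only [Finset.smul_sum]
        refine Finset.sum_congr rfl fun k hk => ?_
        have h1 : k ≤ n + 1 := (Finset.mem_Icc.mp hk).2
        rw [smul_smul]
        congr 1
        rw [← zpow_natCast (σ - c) (n+1), ← zpow_natCast (σ - c) ((n+1) - k),
          ← zpow_add₀ hsc]
        congr 1
        omega
      -- limits
      have h1 : Tendsto g l (𝓝 (a (n+1))) := by
        rw [← hgval]; exact (hgc.tendsto).mono_left hlle
      have h2 : Tendsto g l (𝓝 0) := by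
        have hev : ∀ᶠ σ in l, g σ = ((σ - c) ^ (n+1)) • h σ := by
          filter_upwards [self_mem_nhdsWithin] with σ hσ
          rw [Set.mem_compl_iff, Set.mem_insert_iff] at hσ
          push_neg at hσ
          rw [hgeq σ hσ.1, hA σ hσ.2]
        have ht1 : Tendsto (fun σ => ((σ - c) ^ (n+1) : ℂ)) l (𝓝 0) := by
          have : Tendsto (fun σ => ((σ - c) ^ (n+1) : ℂ)) (𝓝 c) (𝓝 (((c : ℂ) - c)^(n+1))) :=
            ((continuous_id.sub continuous_const).pow _).continuousAt
          simpa [zero_pow (Nat.succ_ne_zero n)] using this.mono_left hlle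
        have ht2 : Tendsto h l (𝓝 (h c)) := hh.tendsto.mono_left hlle
        have := ht1.smul ht2
        rw [zero_smul] at this
        exact Tendsto.congr' (by filter_upwards [hev] with σ hσ using hσ.symm) this
      have hzero : a (n+1) = 0 := tendsto_nhds_unique h1 h2
      -- reduce to n
      have hred : ∀ σ : ℂ, (∑ k ∈ Finset.Icc 1 (n+1), ((σ - c) ^ (-(k : ℤ))) • a k)
          = ∑ k ∈ Finset.Icc 1 n, ((σ - c) ^ (-(k : ℤ))) • a k := by
        intro σ
        rw [Finset.sum_Icc_succ_top (Nat.succ_le_succ (Nat.zero_le n)), hzero, smul_zero, add_zero]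
      intro σ
      rw [hred]
      exact ih a (fun σ' hσ' => (hred σ').symm ▸ hA σ' hσ') σ
  intro σ
  rw [ha]
  exact main m a (fun σ' hσ' => (ha σ').symm.trans (heq σ' hσ')) σ

lemma sum_pp_eq_zero {E : Type*} [NormedAddCommGroup E] [NormedSpace ℂ E]
    {S : Set ℂ} (hS : S.Finite) :
    ∀ (F : Finset ℂ) (p : ℂ → ℂ → E), (∀ c ∈ F, IsPrincipalPart c (p c)) →
      (∀ σ ∉ S, ∑ c ∈ F, p c σ = 0) → ∀ c ∈ F, ∀ σ, p c σ = 0 := by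
  classical
  intro F
  induction F using Finset.induction_on with
  | empty => intro p _ _ c hc; exact absurd hc (Finset.notMem_empty c)
  | insert a F hns ih =>
    intro p hpp hvan
    have hppa : IsPrincipalPart a (p a) := hpp a (Finset.mem_insert_self a F)
    -- continuity of the rest at a
    have hcont : ContinuousAt (fun σ => -∑ c ∈ F, p c σ) a := by
      apply ContinuousAt.neg
      apply tendsto_finset_sum
      intro c hc
      have hac : a ≠ c := fun h => hns (h ▸ hc)
      exact pp_continuousAt (hpp c (Finset.mem_insert_of_mem hc)) hac
    have heq : ∀ σ ∉ S, p a σ = -∑ c ∈ F, p c σ := by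
      intro σ hσ
      have := hvan σ hσ
      rw [Finset.sum_insert hns] at this
      exact eq_neg_of_add_eq_zero_left this
    have hpa0 : ∀ σ, p a σ = 0 := pp_eq_zero hppa hS hcont heq
    have hvan' : ∀ σ ∉ S, ∑ c ∈ F, p c σ = 0 := by
      intro σ hσ
      have := hvan σ hσ
      rw [Finset.sum_insert hns, hpa0 σ, zero_add] at this
      exact this
    intro c hc σ
    rcases Finset.mem_insert.mp hc with h | h
    · exact h ▸ hpa0 σ
    · exact ih p (fun c' hc' => hpp c' (Finset.mem_insert_of_mem hc')) hvan' c h σ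


/-- A linear combination of linearly independent singular functions that vanishes off a
finite set has zero coefficients. -/
lemma sep_lemma {E : Type*} [NormedAddCommGroup E] [NormedSpace ℂ E] {N : ℕ}
    {Ω : Set ℂ} (v : Fin N → ℂ → E) (hli : LinearIndependent ℂ v)
    (hsing : ∀ i, IsSingularFunction Ω (v i)) {S : Set ℂ} (hS : S.Finite)
    (c : Fin N → ℂ) (h0 : ∀ σ ∉ S, ∑ i, c i • v i σ = 0) : c = 0 := by
  classical
  choose Fi pi hFi hppi hrep using hsing
  set F : Finset ℂ := Finset.univ.biUnion Fi with hF
  set q : ℂ → ℂ → E := fun z σ => ∑ i, c i • (if z ∈ Fi i then pi i z σ else 0) with hq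
  have hqpp : ∀ z ∈ F, IsPrincipalPart z (q z) := by
    intro z _
    apply pp_sum
    intro i _
    by_cases h : z ∈ Fi i
    · simp only [if_pos h]
      exact pp_smul (hppi i z h) (c i)
    · simp only [if_neg h]
      simpa using pp_smul (pp_zero z) (c i)
  have hqsum : ∀ σ, ∑ z ∈ F, q z σ = ∑ i, c i • v i σ := by
    intro σ
    rw [hq, Finset.sum_comm]
    refine Finset.sum_congr rfl fun i _ => ?_
    rw [← Finset.smul_sum]
    congr 1
    rw [Finset.sum_ite_mem, Finset.inter_eq_right.mpr (Finset.subset_biUnion_of_mem Fi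
      (Finset.mem_univ i)), hrep i σ]
  have hvan : ∀ σ ∉ S, ∑ z ∈ F, q z σ = 0 := fun σ hσ => (hqsum σ).trans (h0 σ hσ)
  have hq0 : ∀ z ∈ F, ∀ σ, q z σ = 0 := sum_pp_eq_zero hS F q hqpp hvan
  have hcomb : ∀ σ, ∑ i, c i • v i σ = 0 := by
    intro σ
    rw [← hqsum σ]
    exact Finset.sum_eq_zero fun z hz => hq0 z hz σ
  have : (∑ i, c i • v i) = 0 := by
    funext σ
    simpa [Finset.sum_apply] using hcomb σ
  funext i
  exact Fintype.linearIndependent_iff.mp hli c this i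

lemma exists_eval_matrix {𝒟 : Type*} [NormedAddCommGroup 𝒟] [InnerProductSpace ℂ 𝒟] {N : ℕ}
    (v : Fin N → ℂ → 𝒟) {S : Set ℂ}
    (hsep : ∀ c : Fin N → ℂ, (∀ σ ∉ S, ∑ i, c i • v i σ = 0) → c = 0) :
    ∃ (σs : Fin N → ℂ) (ℓs : Fin N → (𝒟 →L[ℂ] ℂ)), (∀ j, σs j ∉ S) ∧
      IsUnit (Matrix.of (fun j i => ℓs j (v i (σs j)))).det := by
  classical
  set W := Fin N → ℂ
  -- evaluation linear map
  set ev : ℂ → (W →ₗ[ℂ] 𝒟) := fun σ => ∑ i, (LinearMap.proj i).smulRight (v i σ) with hev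
  have hev_apply : ∀ σ (c : W), ev σ c = ∑ i, c i • v i σ := by
    intro σ c
    rw [hev]
    simp only [LinearMap.sum_apply, LinearMap.smulRight_apply]
    exact Finset.sum_congr rfl fun i _ => rfl
  set s : Set (Module.Dual ℂ W) :=
    {f | ∃ σ, σ ∉ S ∧ ∃ ℓ : 𝒟 →L[ℂ] ℂ, f = (ℓ : 𝒟 →ₗ[ℂ] ℂ).comp (ev σ)} with hs
  -- the set of functionals spans the dual
  have hspan : Submodule.span ℂ s = ⊤ := by
    apply Submodule.span_eq_top_of_ne_zero
    intro z hz
    by_contra hcon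
    push_neg at hcon
    apply hz
    apply hsep
    intro σ hσ
    have key : ∀ ℓ : 𝒟 →L[ℂ] ℂ, ℓ (∑ i, z i • v i σ) = 0 := by
      intro ℓ
      have hmem : (ℓ : 𝒟 →ₗ[ℂ] ℂ).comp (ev σ) ∈ s := ⟨σ, hσ, ℓ, rfl⟩
      have := hcon _ hmem
      rwa [LinearMap.comp_apply, hev_apply] at this
    have := key ((innerSL ℂ) (∑ i, z i • v i σ))
    simp only [innerSL_apply_apply] at this
    exact inner_self_eq_zero.mp this
  -- extract a basis of the dual from s
  obtain ⟨b, hbs, hbspan, hbli⟩ := exists_linearIndependent ℂ s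
  rw [hspan] at hbspan
  have hB : ⊤ ≤ Submodule.span ℂ (Set.range ((↑) : b → Module.Dual ℂ W)) := by
    rw [Subtype.range_coe]; rw [hbspan]
  set B : Module.Basis b ℂ (Module.Dual ℂ W) := Module.Basis.mk hbli hB with hBdef
  have : Fintype b := FiniteDimensional.fintypeBasisIndex B
  have hcard : Fintype.card b = N := by
    have h1 := Module.finrank_eq_card_basis B
    rw [Subspace.dual_finrank_eq] at h1
    rw [← h1]
    simp [W, Module.finrank_fin_fun]
  set e : b ≃ Fin N := Fintype.equivFinOfCardEq hcard with he
  set Fb : Fin N → Module.Dual ℂ W := fun j => B (e.symm j) with hFb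
  have hFbs : ∀ j, Fb j ∈ s := by
    intro j
    rw [hFb]
    simp only [hBdef, Module.Basis.mk_apply]
    exact hbs (e.symm j).2
  choose σs hσs ℓs hℓs using fun j => hFbs j
  refine ⟨σs, ℓs, hσs, ?_⟩
  -- the matrix is the matrix of the injective map c ↦ (Fb j c)_j
  set G : W →ₗ[ℂ] W := LinearMap.pi Fb with hG
  have hGinj : Function.Injective G := by
    rw [← LinearMap.ker_eq_bot]
    rw [Submodule.eq_bot_iff]
    intro x hx
    rw [LinearMap.mem_ker] at hx
    have hx' : ∀ j, Fb j x = 0 := fun j => congrFun hx j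
    have hall : ∀ f : Module.Dual ℂ W, f x = 0 := by
      intro f
      have hrepr := B.sum_repr f
      rw [← hrepr]
      rw [LinearMap.sum_apply]
      apply Finset.sum_eq_zero
      intro u _
      rw [LinearMap.smul_apply]
      have : B u x = 0 := by
        simpa [hFb] using hx' (e u)
      rw [this, smul_zero]
    exact (Module.forall_dual_apply_eq_zero_iff ℂ x).mp hall
  have hGbij : Function.Bijective G :=
    ⟨hGinj, (LinearMap.injective_iff_surjective).mp hGinj⟩
  set Geq := LinearEquiv.ofBijective G hGbij with hGeq
  have hM : Matrix.of (fun j i => ℓs j (v i (σs j))) = LinearMap.toMatrix' G := by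
    ext j i
    rw [LinearMap.toMatrix'_apply]
    show ℓs j (v i (σs j)) = Fb j _
    rw [hℓs j, LinearMap.comp_apply, hev_apply]
    have hsum : (∑ i' : Fin N, (if i' = i then (1:ℂ) else 0) • v i' (σs j)) = v i (σs j) := by
      rw [Finset.sum_eq_single i]
      · simp
      · intro i' _ hne; simp [if_neg hne]
      · intro h; exact absurd (Finset.mem_univ i) h
    simp only [Pi.single_apply]
    rw [hsum]
    rfl
  rw [hM, LinearMap.det_toMatrix']
  have : G = (Geq : W →ₗ[ℂ] W) := rfl
  rw [this]
  exact LinearEquiv.isUnit_det' Geq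

lemma contDiffOn_finset_prod {X : Type*} [NormedAddCommGroup X] [NormedSpace ℝ X]
    {ι : Type*} (s : Finset ι) (f : ι → X → ℂ) {t : Set X}
    (h : ∀ i ∈ s, ContDiffOn ℝ (⊤ : ℕ∞) (f i) t) :
    ContDiffOn ℝ (⊤ : ℕ∞) (fun x => ∏ i ∈ s, f i x) t := by
  classical
  induction s using Finset.induction_on with
  | empty => simpa using contDiffOn_const
  | insert a s hns ih =>
    simp only [Finset.prod_insert hns]
    exact (h a (Finset.mem_insert_self a s)).mul
      (ih fun i hi => h i (Finset.mem_insert_of_mem hi))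

lemma contDiffOn_det {X : Type*} [NormedAddCommGroup X] [NormedSpace ℝ X] {n : ℕ}
    {A : X → Matrix (Fin n) (Fin n) ℂ} {t : Set X}
    (h : ∀ i j, ContDiffOn ℝ (⊤ : ℕ∞) (fun x => A x i j) t) :
    ContDiffOn ℝ (⊤ : ℕ∞) (fun x => (A x).det) t := by
  simp only [Matrix.det_apply']
  apply ContDiffOn.sum
  intro τ _
  exact contDiffOn_const.mul (contDiffOn_finset_prod Finset.univ _ fun i _ => h (τ i) i)

/-- The space `𝒦` of singular functions `φ` with poles in `Ω` such that `σ ↦ P σ (φ σ)`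
agrees, off a finite set (the poles of `φ`), with a function holomorphic on all of `Ω`. -/
def kernelSpace {𝒟 H : Type*} [NormedAddCommGroup 𝒟] [NormedSpace ℂ 𝒟]
    [NormedAddCommGroup H] [NormedSpace ℂ H]
    (Ω : Set ℂ) (P : ℂ → (𝒟 →L[ℂ] H)) : Set (ℂ → 𝒟) :=
  {φ | IsSingularFunction Ω φ ∧ ∃ g : ℂ → H, DifferentiableOn ℂ g Ω ∧
    ∃ F : Set ℂ, F.Finite ∧ ∀ σ ∈ Ω \ F, P σ (φ σ) = g σ}

/-- The local kernel space `𝔎(𝔓, S)` of a holomorphic family of `n × n` matrices on `D`: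
singular functions `φ : ℂ → ℂⁿ` with poles in `S` such that `σ ↦ 𝔓(σ) · φ(σ)` agrees,
off a finite set (the poles of `φ`), with a function holomorphic on all of `D`. -/
def matKernelSpace {n : ℕ} (D : Set ℂ) (P : ℂ → Matrix (Fin n) (Fin n) ℂ) (S : Set ℂ) :
    Set (ℂ → (Fin n → ℂ)) :=
  {φ | IsSingularFunction S φ ∧ ∃ g : ℂ → (Fin n → ℂ),
    (∀ i, DifferentiableOn ℂ (fun σ => g σ i) D) ∧
    ∃ F : Set ℂ, F.Finite ∧ ∀ σ ∈ D \ F, (P σ).mulVec (φ σ) = g σ}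

/-- A subset `K` of a complex vector space (in practice a linear subspace) has a basis of
cardinality `d`: there are `d` elements of `K` that are linearly independent and span `K`. -/
def HasBasisOfCard {E : Type*} [AddCommGroup E] [Module ℂ E] (K : Set E) (d : ℕ) : Prop :=
  ∃ φ : Fin d → E, (∀ i, φ i ∈ K) ∧ LinearIndependent ℂ φ ∧
    ∀ ψ ∈ K, ψ ∈ Submodule.span ℂ (Set.range φ)

/-- A bounded operator is Fredholm of index `0`: finite-dimensional kernel, closed range,
finite-dimensional cokernel, and `dim ker = dim coker`. -/
def FredholmIndexZero {𝒟 H : Type*} [NormedAddCommGroup 𝒟] [NormedSpace ℂ 𝒟]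
    [NormedAddCommGroup H] [NormedSpace ℂ H] (T : 𝒟 →L[ℂ] H) : Prop :=
  FiniteDimensional ℂ (LinearMap.ker (T : 𝒟 →ₗ[ℂ] H)) ∧ IsClosed (LinearMap.range (T : 𝒟 →ₗ[ℂ] H) : Set H) ∧
    FiniteDimensional ℂ (H ⧸ LinearMap.range (T : 𝒟 →ₗ[ℂ] H)) ∧
    Module.finrank ℂ (LinearMap.ker (T : 𝒟 →ₗ[ℂ] H)) = Module.finrank ℂ (H ⧸ LinearMap.range (T : 𝒟 →ₗ[ℂ] H))

/-- smoothness of the coefficient functions of a section of the kernel bundle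
with respect to a pointwise basis of smooth sections. -/
theorem statement0
    {d : ℕ} {𝒟 H : Type*}
    [NormedAddCommGroup 𝒟] [InnerProductSpace ℂ 𝒟] [CompleteSpace 𝒟]
    [NormedAddCommGroup H] [InnerProductSpace ℂ H] [CompleteSpace H]
    (U : Set (EuclideanSpace ℝ (Fin d))) (hUopen : IsOpen U) (hUconn : IsConnected U)
    (Ω : Set ℂ) (hΩopen : IsOpen Ω) (hΩconn : IsConnected Ω)
    (P : EuclideanSpace ℝ (Fin d) × ℂ → (𝒟 →L[ℂ] H))
    (hPsmooth : ContDiffOn ℝ (⊤ : ℕ∞) P (U ×ˢ Ω))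
    (hPholo : ∀ y ∈ U, DifferentiableOn ℂ (fun σ => P (y, σ)) Ω)
    (hFred : ∀ y ∈ U, ∀ σ ∈ Ω, FredholmIndexZero (P (y, σ)))
    (hinv : ∀ y ∈ U, ∃ σ ∈ Ω, Function.Bijective (P (y, σ)))
    (hfin : ∀ y ∈ U, {σ ∈ Ω | ¬ Function.Bijective (P (y, σ))}.Finite)
    (hclosed : closure {p : EuclideanSpace ℝ (Fin d) × ℂ |
        p.1 ∈ U ∧ p.2 ∈ Ω ∧ ¬ Function.Bijective (P p)} ∩ (U ×ˢ (univ : Set ℂ)) ⊆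
        {p : EuclideanSpace ℝ (Fin d) × ℂ | p.1 ∈ U ∧ p.2 ∈ Ω ∧ ¬ Function.Bijective (P p)})
    (U' : Set (EuclideanSpace ℝ (Fin d))) (hU'open : IsOpen U') (hU'sub : U' ⊆ U)
    (N : ℕ) (φ : Fin N → EuclideanSpace ℝ (Fin d) × ℂ → 𝒟)
    (hφmem : ∀ y ∈ U', ∀ i, (fun σ => φ i (y, σ)) ∈ kernelSpace Ω (fun σ => P (y, σ)))
    (hφli : ∀ y ∈ U', LinearIndependent ℂ (fun i : Fin N => fun σ => φ i (y, σ)))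
    (hφspan : ∀ y ∈ U', ∀ ψ' ∈ kernelSpace Ω (fun σ => P (y, σ)),
      ψ' ∈ Submodule.span ℂ (Set.range fun i : Fin N => fun σ => φ i (y, σ)))
    (hφsmooth : ∀ i, ContDiffOn ℝ (⊤ : ℕ∞) (φ i)
      ((U' ×ˢ (univ : Set ℂ)) \
        {p : EuclideanSpace ℝ (Fin d) × ℂ | p.1 ∈ U ∧ p.2 ∈ Ω ∧ ¬ Function.Bijective (P p)}))
    (hφholo : ∀ y ∈ U', ∀ i, DifferentiableOn ℂ (fun σ => φ i (y, σ))
      {σ : ℂ | ¬ (σ ∈ Ω ∧ ¬ Function.Bijective (P (y, σ)))})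
    (ψ : EuclideanSpace ℝ (Fin d) × ℂ → 𝒟)
    (hψsmooth : ContDiffOn ℝ (⊤ : ℕ∞) ψ
      ((U' ×ˢ (univ : Set ℂ)) \
        {p : EuclideanSpace ℝ (Fin d) × ℂ | p.1 ∈ U ∧ p.2 ∈ Ω ∧ ¬ Function.Bijective (P p)}))
    (hψholo : ∀ y ∈ U', DifferentiableOn ℂ (fun σ => ψ (y, σ))
      {σ : ℂ | ¬ (σ ∈ Ω ∧ ¬ Function.Bijective (P (y, σ)))})
    (hψmem : ∀ y ∈ U', (fun σ => ψ (y, σ)) ∈ kernelSpace Ω (fun σ => P (y, σ)))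
    (f : Fin N → EuclideanSpace ℝ (Fin d) → ℂ)
    (hf : ∀ y ∈ U', (fun σ => ψ (y, σ)) = fun σ => ∑ i, f i y • φ i (y, σ)) :
    ∀ i, ContDiffOn ℝ (⊤ : ℕ∞) (f i) U' := by
  intro i0
  apply contDiffOn_of_locally_contDiffOn
  intro y₀ hy₀
  classical
  set Ebad : Set (EuclideanSpace ℝ (Fin d) × ℂ) :=
    {p | p.1 ∈ U ∧ p.2 ∈ Ω ∧ ¬ Function.Bijective (P p)} with hEbad
  have hy₀U : y₀ ∈ U := hU'sub hy₀
  set v : Fin N → ℂ → 𝒟 := fun i σ => φ i (y₀, σ) with hv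
  set S₀ : Set ℂ := {σ ∈ Ω | ¬ Function.Bijective (P (y₀, σ))} with hS₀
  have hS₀fin : S₀.Finite := hfin y₀ hy₀U
  have hsep : ∀ c : Fin N → ℂ, (∀ σ ∉ S₀, ∑ i, c i • v i σ = 0) → c = 0 := fun c hc =>
    sep_lemma v (hφli y₀ hy₀) (fun i => (hφmem y₀ hy₀ i).1) hS₀fin c hc
  obtain ⟨σs, ℓs, hσs, hdet⟩ := exists_eval_matrix v hsep
  set ι : Fin N → EuclideanSpace ℝ (Fin d) → EuclideanSpace ℝ (Fin d) × ℂ :=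
    fun j y => (y, σs j) with hι
  have hιcont : ∀ j, Continuous (ι j) := fun j => continuous_id.prodMk continuous_const
  have hιsmooth : ∀ j, ContDiff ℝ (⊤ : ℕ∞) (ι j) := fun j => contDiff_id.prodMk contDiff_const
  set A : Set (EuclideanSpace ℝ (Fin d)) :=
    U' ∩ ⋂ j, (ι j) ⁻¹' (closure Ebad)ᶜ with hA
  have hAopen : IsOpen A := hU'open.inter (isOpen_iInter_of_finite fun j =>
    (isClosed_closure.isOpen_compl).preimage (hιcont j))
  have hy₀A : y₀ ∈ A := by
    refine ⟨hy₀, Set.mem_iInter.mpr fun j => ?_⟩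
    intro hmem
    have h2 := hclosed ⟨hmem, ⟨hy₀U, trivial⟩⟩
    exact hσs j ⟨h2.2.1, h2.2.2⟩
  have hAprop : ∀ y ∈ A, ∀ j, (y, σs j) ∈ (U' ×ˢ (univ : Set ℂ)) \ Ebad := by
    intro y hy j
    exact ⟨⟨hy.1, trivial⟩, fun hmem => (Set.mem_iInter.mp hy.2 j) (subset_closure hmem)⟩
  set Mm : EuclideanSpace ℝ (Fin d) → Matrix (Fin N) (Fin N) ℂ :=
    fun y => Matrix.of fun j i => ℓs j (φ i (y, σs j)) with hMm
  set bb : EuclideanSpace ℝ (Fin d) → (Fin N → ℂ) := fun y j => ℓs j (ψ (y, σs j)) with hbb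
  have hφA : ∀ i j, ContDiffOn ℝ (⊤ : ℕ∞) (fun y => φ i (y, σs j)) A := fun i j =>
    (hφsmooth i).comp ((hιsmooth j).contDiffOn) (fun y hy => hAprop y hy j)
  have hψA : ∀ j, ContDiffOn ℝ (⊤ : ℕ∞) (fun y => ψ (y, σs j)) A := fun j =>
    hψsmooth.comp ((hιsmooth j).contDiffOn) (fun y hy => hAprop y hy j)
  have hMsmooth : ∀ j i, ContDiffOn ℝ (⊤ : ℕ∞) (fun y => Mm y j i) A := fun j i =>
    ((ℓs j).restrictScalars ℝ).contDiff.comp_contDiffOn (hφA i j)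
  have hbbsmooth : ∀ j, ContDiffOn ℝ (⊤ : ℕ∞) (fun y => bb y j) A := fun j =>
    ((ℓs j).restrictScalars ℝ).contDiff.comp_contDiffOn (hψA j)
  have hdets : ContDiffOn ℝ (⊤ : ℕ∞) (fun y => (Mm y).det) A := contDiffOn_det (fun j i => hMsmooth j i)
  set V : Set (EuclideanSpace ℝ (Fin d)) :=
    A ∩ (fun y => (Mm y).det) ⁻¹' ({0}ᶜ) with hV
  have hVopen : IsOpen V :=
    (hdets.continuousOn).isOpen_inter_preimage hAopen isOpen_compl_singleton
  have hy₀V : y₀ ∈ V := ⟨hy₀A, by simpa using hdet.ne_zero⟩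
  have hVA : V ⊆ A := Set.inter_subset_left
  have hMf : ∀ y ∈ U', (Mm y).mulVec (fun i => f i y) = bb y := by
    intro y hy
    funext j
    have hψval : ψ (y, σs j) = ∑ i, f i y • φ i (y, σs j) := congrFun (hf y hy) (σs j)
    show ∑ i, Mm y j i * f i y = ℓs j (ψ (y, σs j))
    rw [hψval, map_sum]
    refine Finset.sum_congr rfl fun i _ => ?_
    rw [map_smul]
    simp [hMm, mul_comm, smul_eq_mul]
  have hfeq : ∀ y ∈ V, (fun i => f i y) = (Mm y)⁻¹.mulVec (bb y) := by
    intro y hy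
    have hdet' : IsUnit (Mm y).det := isUnit_iff_ne_zero.mpr hy.2
    rw [← hMf y hy.1.1, Matrix.mulVec_mulVec, Matrix.nonsing_inv_mul _ hdet', Matrix.one_mulVec]
  have hadj : ∀ j, ContDiffOn ℝ (⊤ : ℕ∞) (fun y => (Mm y).adjugate i0 j) A := by
    intro j
    have hrw : ∀ y, (Mm y).adjugate i0 j = ((Mm y).updateRow j (Pi.single i0 1)).det :=
      fun y => Matrix.adjugate_apply _ _ _
    simp only [hrw]
    apply contDiffOn_det
    intro a b
    by_cases hab : a = j
    · subst hab
      simp only [Matrix.updateRow_self]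
      exact contDiffOn_const
    · simp only [Matrix.updateRow_ne hab]
      exact hMsmooth a b
  have hformula : ContDiffOn ℝ (⊤ : ℕ∞)
      (fun y => ((Mm y).det)⁻¹ * ∑ j, (Mm y).adjugate i0 j * bb y j) V := by
    refine ContDiffOn.mul ((hdets.mono hVA).inv (fun y hy => hy.2)) ?_
    apply ContDiffOn.sum
    intro j _
    exact ((hadj j).mono hVA).mul ((hbbsmooth j).mono hVA)
  have hfval : ∀ y ∈ V, f i0 y = ((Mm y).det)⁻¹ * ∑ j, (Mm y).adjugate i0 j * bb y j := by
    intro y hy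
    have h1 : f i0 y = ((Mm y)⁻¹.mulVec (bb y)) i0 := congrFun (hfeq y hy) i0
    rw [h1, Matrix.inv_def]
    simp only [Matrix.smul_mulVec, Pi.smul_apply, smul_eq_mul, Ring.inverse_eq_inv']
    rfl
  refine ⟨V, hVopen, hy₀V, ?_⟩
  have hsmoothV : ContDiffOn ℝ (⊤ : ℕ∞) (f i0) V :=
    hformula.congr (fun y hy => hfval y hy)
  exact hsmoothV.mono Set.inter_subset_right
end
end

section
/- Let n ≥ 1, σ₀ ∈ ℂ, ε > 0, and let 𝔓 : B(σ₀,ε) → Matrix n n ℂ be holomorphic (entrywise) on the open ball B(σ₀,ε) with 𝔓(σ) invertible for all σ with 0 < |σ − σ₀| < ε. Define 𝔔 : B(σ̄₀,ε) → Matrix n n ℂ by 𝔔(σ) = 𝔓(σ̄)ᴴ (conjugate transpose); 𝔔 is holomorphic on B(σ̄₀,ε). Let 𝔎 = 𝔎(𝔓, {σ₀}) and 𝔎* = 𝔎(𝔔, {σ̄₀}). For φ ∈ 𝔎, ψ ∈ 𝔎* and 0 < r < ε set [φ,ψ] = (1/(2π)) ∮_{|σ−σ₀|=r} ⟨𝔓(σ)·φ(σ),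 ψ(σ̄)⟩ dσ, where ⟨u,v⟩ = Σ_{i=1}^n u_i · conj(v_i) is the standard Hermitian inner product on ℂⁿ. Then [φ,ψ] does not depend on the choice of r ∈ (0,ε), and the pairing [·,·] : 𝔎 × 𝔎* → ℂ is nondegenerate: if φ ∈ 𝔎 satisfies [φ,ψ] = 0 for all ψ ∈ 𝔎*, then φ = 0, and if ψ ∈ 𝔎* satisfies [φ,ψ] = 0 for all φ ∈ 𝔎, then ψ = 0. -/
open Metric Set Complex

noncomputable section

/-- The pairing `[φ,ψ] = (1/2π) ∮_{|σ-σ₀|=r} ⟨𝔓(σ)·φ(σ), ψ(σ̄)⟩ dσ`. -/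
def matPairing {n : ℕ} (𝔓 : ℂ → Matrix (Fin n) (Fin n) ℂ) (σ₀ : ℂ) (r : ℝ)
    (φ ψ : ℂ → (Fin n → ℂ)) : ℂ :=
  (2 * (Real.pi : ℂ))⁻¹ *
    ∮ σ in C(σ₀, r), ∑ i, ((𝔓 σ).mulVec (φ σ) i) * (starRingEnd ℂ) (ψ ((starRingEnd ℂ) σ) i)


/-!
Write `ψ^*(σ) = conj (ψ (conj σ))`. The map `ψ ↦ ψ^*` carries the local kernel space of the
adjoint family `𝔔` onto that of `𝔓ᵀ` at `σ₀`, and turns `[φ, ψ]` into the bilinear pairing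
`(2π)⁻¹ ∮ (𝔓 φ) ⬝ᵥ ψ^*`, which is symmetric under `(𝔓, φ, χ) ↦ (𝔓ᵀ, χ, φ)`; so both
nondegeneracy claims reduce to one.

On the circle the integrand agrees, off finitely many points, with `g ⬝ᵥ ψ^*`, where `g`
is the holomorphic extension of `𝔓 φ`; this is holomorphic on the punctured disc, whence the
independence of the radius. To see that the coefficient `a_k` of
`φ = ∑ a_k (σ - σ₀)^(-k)` vanishes in its `i`-th coordinate, pair `φ` with the principal part
`χ` of the meromorphic function `σ ↦ (σ - σ₀)^(k-1) • (𝔓 σ)⁻¹ i`. Then `𝔓ᵀ χ` is holomorphic,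
so `χ` is an admissible test function, and `(𝔓 φ) ⬝ᵥ χ = (σ - σ₀)^(k-1) φ_i` up to a holomorphic
function, whose circle integral is `2πi a_k i`.
-/

open Filter Topology ComplexConjugate
open scoped Real

section CircleIntegral

variable {E : Type*} [NormedAddCommGroup E] [NormedSpace ℂ E] {c : ℂ} {r ε : ℝ}

theorem circleIntegral_congr_off_countable {f g : ℂ → E} (hr : 0 < r) {S : Set ℂ}
    (hS : S.Countable) (h : ∀ z ∈ sphere c r \ S, f z = g z) :
    (∮ z in C(c, r), f z) = ∮ z in C(c, r), g z := by
  refine intervalIntegral.integral_congr_ae ?_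
  filter_upwards [(hS.preimage_circleMap c hr.ne').ae_notMem MeasureTheory.volume] with θ hθ _
  rw [h _ ⟨circleMap_mem_sphere c hr.le θ, hθ⟩]

theorem circleIntegral_eq_zero_of_differentiableOn_ball {f : ℂ → E} [CompleteSpace E]
    (hf : DifferentiableOn ℂ f (ball c ε)) (hr : 0 ≤ r) (hrε : r < ε) :
    (∮ z in C(c, r), f z) = 0 :=
  circleIntegral_eq_zero_of_differentiable_on_off_countable hr countable_empty
    (hf.continuousOn.mono (closedBall_subset_ball hrε))
    fun _ hz => hf.differentiableAt (isOpen_ball.mem_nhds (ball_subset_ball hrε.le hz.1))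

theorem circleIntegral_eq_of_differentiableOn_punctured_ball {f : ℂ → E} [CompleteSpace E]
    (hf : DifferentiableOn ℂ f (ball c ε \ {c})) {r₁ r₂ : ℝ} (h₁ : 0 < r₁) (h₁ε : r₁ < ε)
    (h₂ : 0 < r₂) (h₂ε : r₂ < ε) :
    (∮ z in C(c, r₁), f z) = ∮ z in C(c, r₂), f z := by
  wlog hle : r₁ ≤ r₂ generalizing r₁ r₂
  · exact (this h₂ h₂ε h₁ h₁ε (le_of_not_ge hle)).symm
  have hsub : closedBall c r₂ \ ball c r₁ ⊆ ball c ε \ {c} := fun z hz =>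
    ⟨closedBall_subset_ball h₂ε hz.1, fun hzc => hz.2 (hzc ▸ mem_ball_self h₁)⟩
  refine (circleIntegral_eq_of_differentiable_on_annulus_off_countable h₁ hle countable_empty
    (hf.continuousOn.mono hsub) fun z hz => hf.differentiableAt ?_).symm
  exact (isOpen_ball.sdiff isClosed_singleton).mem_nhds
    (hsub ⟨ball_subset_closedBall hz.1.1, fun h => hz.1.2 (ball_subset_closedBall h)⟩)

theorem circleIntegral_sub_pow_smul_principalPart [CompleteSpace E] (hr : 0 < r) (a : ℕ → E)
    {m k : ℕ} (hk : k ∈ Finset.Icc 1 m) :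
    (∮ z in C(c, r), (z - c) ^ (k - 1) • ∑ j ∈ Finset.Icc 1 m, (z - c) ^ (-(j : ℤ)) • a j) =
      (2 * π * I) • a k := by
  have hk1 : 1 ≤ k := (Finset.mem_Icc.mp hk).1
  have hpow : EqOn (fun z => (z - c) ^ (k - 1) • ∑ j ∈ Finset.Icc 1 m, (z - c) ^ (-(j : ℤ)) • a j)
      (fun z => ∑ j ∈ Finset.Icc 1 m, (z - c) ^ ((k : ℤ) - 1 - j) • a j) (sphere c r) := by
    intro z hz
    have hz0 : z - c ≠ 0 := sub_ne_zero.2 (ne_of_mem_sphere hz hr.ne')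
    simp only [Finset.smul_sum, smul_smul, ← zpow_natCast, ← zpow_add₀ hz0, Nat.cast_sub hk1]
    ring_nf
  have hint : ∀ j : ℕ, CircleIntegrable (fun z => (z - c) ^ ((k : ℤ) - 1 - j) • a j) c r :=
    fun j => (((continuousOn_id.sub continuousOn_const).zpow₀ _ fun z hz =>
      Or.inl (sub_ne_zero.2 (ne_of_mem_sphere hz hr.ne'))).smul continuousOn_const).circleIntegrable
      hr.le
  rw [circleIntegral.integral_congr hr.le hpow, circleIntegral.integral_fun_sum fun j _ => hint j,
    Finset.sum_eq_single_of_mem k hk fun j _ hjk => ?_]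
  · simp [circleIntegral.integral_sub_center_inv c hr.ne']
  · rw [circleIntegral.integral_smul_const, circleIntegral.integral_sub_zpow_of_ne (by omega),
      zero_smul]

end CircleIntegral

section PrincipalPart

variable {E : Type*} [NormedAddCommGroup E] [NormedSpace ℂ E] {c : ℂ}

theorem isSingularFunction_singleton_iff {φ : ℂ → E} :
    IsSingularFunction {c} φ ↔ IsPrincipalPart c φ := by
  constructor
  · rintro ⟨F, p, hF, hp, hφ⟩
    rcases Finset.subset_singleton_iff.mp (fun x hx => by simpa using hF hx) with rfl | rfl
    · exact ⟨0, 0, fun σ => by simp [hφ σ]⟩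
    · obtain ⟨m, a, hpc⟩ := hp c (Finset.mem_singleton_self c)
      exact ⟨m, a, fun σ => by rw [hφ σ, Finset.sum_singleton, hpc]⟩
  · intro h
    exact ⟨{c}, fun _ => φ, by simp, by simpa using h, fun σ => (Finset.sum_singleton _ _).symm⟩

theorem IsPrincipalPart.differentiableAt {φ : ℂ → E} (hφ : IsPrincipalPart c φ) {z : ℂ}
    (hz : z ≠ c) : DifferentiableAt ℂ φ z := by
  obtain ⟨m, a, ha⟩ := hφ
  rw [funext ha]
  exact DifferentiableAt.fun_sum fun k _ =>
    ((differentiableAt_id.sub_const c).zpow (Or.inl (sub_ne_zero.2 hz))).smul_const (a k)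

theorem AnalyticAt.exists_zpow_smul_eq_principalPart_add {G : ℂ → E} (hG : AnalyticAt ℂ G c)
    (p : ℕ) : ∃ (a : ℕ → E) (ρ : ℂ → E), AnalyticAt ℂ ρ c ∧ ∀ z, z ≠ c →
      (z - c) ^ (-(p : ℤ)) • G z = ∑ k ∈ Finset.Icc 1 p, (z - c) ^ (-(k : ℤ)) • a k + ρ z := by
  induction p generalizing G with
  | zero => exact ⟨0, G, hG, fun z _ => by simp⟩
  | succ p ih =>
    have hdG : AnalyticAt ℂ (dslope G c) c :=
      let ⟨_, hq⟩ := hG; hq.has_fpower_series_dslope_fslope.analyticAt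
    obtain ⟨a, ρ, hρ, ha⟩ := ih hdG
    refine ⟨fun k => if k = p + 1 then G c else a k, ρ, hρ, fun z hz => ?_⟩
    have hz0 : z - c ≠ 0 := sub_ne_zero.2 hz
    have hG : G z = G c + (z - c) • dslope G c z := by rw [sub_smul_dslope]; abel
    rw [Finset.sum_Icc_succ_top (by omega)]
    beta_reduce
    rw [if_pos rfl,
      Finset.sum_congr rfl fun k hk => by rw [if_neg (by simp at hk; omega)], add_right_comm,
      ← ha z hz, hG, smul_add, smul_smul, ← zpow_add_one₀ hz0, add_comm]
    congr 3
    push_cast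
    ring

theorem exists_inv_smul_eq_principalPart_add [CompleteSpace E] {U : Set ℂ} (hU : IsOpen U)
    (hc : c ∈ U) {N : ℂ → ℂ} (hN : DifferentiableOn ℂ N U) (hN0 : ∀ z ∈ U, z ≠ c → N z ≠ 0)
    {v : ℂ → E} (hv : DifferentiableOn ℂ v U) :
    ∃ χ : ℂ → E, IsPrincipalPart c χ ∧ ∃ e : ℂ → E, DifferentiableOn ℂ e U ∧
      ∀ z ∈ U, z ≠ c → (N z)⁻¹ • v z = χ z + e z := by
  have hNc : AnalyticAt ℂ N c := hN.analyticAt (hU.mem_nhds hc)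
  have hN_ne : ¬∀ᶠ z in 𝓝 c, N z = 0 := fun h0 => by
    have : ∀ᶠ z in 𝓝[≠] c, (N z = 0 ∧ z ∈ U) ∧ z ≠ c :=
      ((h0.and (hU.eventually_mem hc)).filter_mono nhdsWithin_le_nhds).and self_mem_nhdsWithin
    obtain ⟨z, ⟨hz0, hzU⟩, hzc⟩ := this.exists
    exact hN0 z hzU hzc hz0
  obtain ⟨p, u, hu, hu0, hNu⟩ := hNc.exists_eventuallyEq_pow_smul_nonzero_iff.2 hN_ne
  obtain ⟨a, ρ, hρ, hρa⟩ := AnalyticAt.exists_zpow_smul_eq_principalPart_add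
    (G := fun z => (u z)⁻¹ • v z) ((hu.inv hu0).smul (hv.analyticAt (hU.mem_nhds hc))) p
  set χ : ℂ → E := fun z => ∑ k ∈ Finset.Icc 1 p, (z - c) ^ (-(k : ℤ)) • a k
  have hχ : IsPrincipalPart c χ := ⟨p, a, fun _ => rfl⟩
  -- the regular part of `N⁻¹ • v`, its removable singularity at `c` filled in by `ρ c`
  set e := Function.update (fun z => (N z)⁻¹ • v z - χ z) c (ρ c)
  have he : ∀ z, z ≠ c → e z = (N z)⁻¹ • v z - χ z := fun z hz => Function.update_of_ne hz _ _
  refine ⟨χ, hχ, e, fun z hzU => ?_, fun z _ hz => by rw [he z hz, add_sub_cancel]⟩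
  refine DifferentiableAt.differentiableWithinAt ?_
  rcases eq_or_ne z c with rfl | hzc
  · refine hρ.differentiableAt.congr_of_eventuallyEq
      (eventuallyEq_nhds_of_eventuallyEq_nhdsNE ?_ (Function.update_self _ _ _))
    filter_upwards [hNu.filter_mono nhdsWithin_le_nhds, self_mem_nhdsWithin] with w hw hwz
    rw [he w hwz, hw, smul_eq_mul, mul_inv, mul_smul, ← zpow_natCast, ← zpow_neg, hρa w hwz,
      add_sub_cancel_left]
  · refine ((hN.differentiableAt (hU.mem_nhds hzU)).inv (hN0 z hzU hzc)).smul
      (hv.differentiableAt (hU.mem_nhds hzU)) |>.sub (hχ.differentiableAt hzc)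
      |>.congr_of_eventuallyEq ?_
    filter_upwards [eventually_ne_nhds hzc] with w hw using he w hw

end PrincipalPart

section MatrixFamily

open Matrix

variable {n : ℕ}

theorem differentiableOn_det {D : Set ℂ} {P : ℂ → Matrix (Fin n) (Fin n) ℂ}
    (hP : ∀ i j, DifferentiableOn ℂ (fun σ => P σ i j) D) :
    DifferentiableOn ℂ (fun σ => (P σ).det) D := by
  simp only [det_apply']
  exact DifferentiableOn.fun_sum fun τ _ =>
    (differentiableOn_const _).mul (DifferentiableOn.fun_finsetProd fun i _ => hP (τ i) i)

theorem differentiableOn_adjugate_row {D : Set ℂ} {P : ℂ → Matrix (Fin n) (Fin n) ℂ}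
    (hP : ∀ i j, DifferentiableOn ℂ (fun σ => P σ i j) D) (i : Fin n) :
    DifferentiableOn ℂ (fun σ => (P σ).adjugate i) D := by
  refine differentiableOn_pi.2 fun j => ?_
  simp only [adjugate_apply]
  refine differentiableOn_det fun k l => ?_
  rcases eq_or_ne k j with rfl | hk
  · simp
  · simpa [hk] using hP k l

theorem differentiableOn_mulVec {D : Set ℂ} {P : ℂ → Matrix (Fin n) (Fin n) ℂ}
    (hP : ∀ i j, DifferentiableOn ℂ (fun σ => P σ i j) D) {v : ℂ → Fin n → ℂ}
    (hv : DifferentiableOn ℂ v D) : DifferentiableOn ℂ (fun σ => P σ *ᵥ v σ) D := by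
  rw [differentiableOn_pi] at hv ⊢
  simp only [mulVec, dotProduct]
  exact fun i => DifferentiableOn.fun_sum fun j _ => (hP i j).mul (hv j)

theorem conj_mem_ball_iff {c σ : ℂ} {ε : ℝ} : conj σ ∈ ball c ε ↔ σ ∈ ball (conj c) ε := by
  simp [mem_ball, dist_conj_comm]

theorem DifferentiableOn.conj_conj_ball {f : ℂ → ℂ} {c : ℂ} {ε : ℝ}
    (hf : DifferentiableOn ℂ f (ball c ε)) :
    DifferentiableOn ℂ (conj ∘ f ∘ conj) (ball (conj c) ε) := fun σ hσ => by
  have hfσ := (hf.differentiableAt (isOpen_ball.mem_nhds (conj_mem_ball_iff.2 hσ))).conj_conj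
  rw [conj_conj] at hfσ
  exact hfσ.differentiableWithinAt

def conjReflect (ψ : ℂ → Fin n → ℂ) : ℂ → Fin n → ℂ := star ∘ ψ ∘ conj

theorem conjReflect_apply (ψ : ℂ → Fin n → ℂ) (σ : ℂ) : conjReflect ψ σ = star (ψ (conj σ)) :=
  rfl

@[simp]
theorem conjReflect_conjReflect (ψ : ℂ → Fin n → ℂ) : conjReflect (conjReflect ψ) = ψ := by
  ext σ i
  simp [conjReflect_apply]

theorem IsPrincipalPart.conjReflect {c : ℂ} {ψ : ℂ → Fin n → ℂ} (hψ : IsPrincipalPart c ψ) :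
    IsPrincipalPart (conj c) (conjReflect ψ) := by
  obtain ⟨m, a, ha⟩ := hψ
  refine ⟨m, fun k => star (a k), fun σ => ?_⟩
  simp [conjReflect_apply, ha, star_sum, star_smul]

theorem conjReflect_mem_matKernelSpace {c : ℂ} {ε : ℝ} {R : ℂ → Matrix (Fin n) (Fin n) ℂ}
    {ψ : ℂ → Fin n → ℂ} (hψ : ψ ∈ matKernelSpace (ball c ε) R {c}) :
    conjReflect ψ ∈
      matKernelSpace (ball (conj c) ε) (fun σ => (R (conj σ)).map conj) {conj c} := by
  obtain ⟨hψs, g, hg, F, hF, hRg⟩ := hψ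
  refine ⟨isSingularFunction_singleton_iff.2 (isSingularFunction_singleton_iff.1 hψs).conjReflect,
    conjReflect g, fun i => (hg i).conj_conj_ball, conj ⁻¹' F, hF.preimage star_injective.injOn,
    ?_⟩
  rintro σ ⟨hσ, hσF⟩
  rw [conjReflect_apply, conjReflect_apply, ← hRg (conj σ) ⟨conj_mem_ball_iff.2 hσ, hσF⟩]
  ext i
  simp [mulVec, dotProduct]

theorem conjReflect_mem_matKernelSpace_transpose {c : ℂ} {ε : ℝ}
    {P : ℂ → Matrix (Fin n) (Fin n) ℂ} {ψ : ℂ → Fin n → ℂ}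
    (hψ : ψ ∈ matKernelSpace (ball (conj c) ε) (fun σ => (P (conj σ))ᴴ) {conj c}) :
    conjReflect ψ ∈ matKernelSpace (ball c ε) (fun σ => (P σ)ᵀ) {c} := by
  have hPT : (fun σ => ((P σ)ᴴ).map conj) = fun σ => (P σ)ᵀ := by
    ext σ i j
    simp
  have h := conjReflect_mem_matKernelSpace hψ
  simp only [conj_conj, hPT] at h
  exact h

theorem conjReflect_mem_matKernelSpace_conjTranspose {c : ℂ} {ε : ℝ}
    {P : ℂ → Matrix (Fin n) (Fin n) ℂ} {χ : ℂ → Fin n → ℂ}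
    (hχ : χ ∈ matKernelSpace (ball c ε) (fun σ => (P σ)ᵀ) {c}) :
    conjReflect χ ∈ matKernelSpace (ball (conj c) ε) (fun σ => (P (conj σ))ᴴ) {conj c} := by
  have hPT : (fun σ => ((P (conj σ))ᵀ).map conj) = fun σ => (P (conj σ))ᴴ := by
    ext σ i j
    simp
  rw [← hPT]
  exact conjReflect_mem_matKernelSpace (R := fun σ => (P σ)ᵀ) hχ

end MatrixFamily

section Pairing

open Matrix

variable {n : ℕ} {c : ℂ} {ε r : ℝ} {P : ℂ → Matrix (Fin n) (Fin n) ℂ}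

theorem DifferentiableOn.dotProduct {D : Set ℂ} {v w : ℂ → Fin n → ℂ}
    (hv : DifferentiableOn ℂ v D) (hw : DifferentiableOn ℂ w D) :
    DifferentiableOn ℂ (fun σ => v σ ⬝ᵥ w σ) D := by
  rw [differentiableOn_pi] at hv hw
  exact DifferentiableOn.fun_sum fun i _ => (hv i).mul (hw i)

def matBilinPairing (P : ℂ → Matrix (Fin n) (Fin n) ℂ) (c : ℂ) (r : ℝ) (φ χ : ℂ → Fin n → ℂ) :
    ℂ :=
  (2 * (π : ℂ))⁻¹ * ∮ σ in C(c, r), P σ *ᵥ φ σ ⬝ᵥ χ σ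

theorem matPairing_eq_matBilinPairing (φ ψ : ℂ → Fin n → ℂ) :
    matPairing P c r φ ψ = matBilinPairing P c r φ (conjReflect ψ) :=
  rfl

theorem matBilinPairing_transpose (φ χ : ℂ → Fin n → ℂ) :
    matBilinPairing P c r φ χ = matBilinPairing (fun σ => (P σ)ᵀ) c r χ φ := by
  simp only [matBilinPairing, mulVec_transpose, ← dotProduct_mulVec, dotProduct_comm (χ _)]

theorem matBilinPairing_eq_of_mem_matKernelSpace {φ χ : ℂ → Fin n → ℂ}
    (hφ : φ ∈ matKernelSpace (ball c ε) P {c}) (hχ : IsPrincipalPart c χ) {r₁ r₂ : ℝ}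
    (h₁ : 0 < r₁) (h₁ε : r₁ < ε) (h₂ : 0 < r₂) (h₂ε : r₂ < ε) :
    matBilinPairing P c r₁ φ χ = matBilinPairing P c r₂ φ χ := by
  obtain ⟨-, g, hg, F, hF, hPg⟩ := hφ
  have hcongr : ∀ r, 0 < r → r < ε →
      (∮ σ in C(c, r), P σ *ᵥ φ σ ⬝ᵥ χ σ) = ∮ σ in C(c, r), g σ ⬝ᵥ χ σ :=
    fun r hr hrε => circleIntegral_congr_off_countable hr hF.countable fun z hz => by
      rw [hPg z ⟨sphere_subset_ball hrε hz.1, hz.2⟩]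
  have hd : DifferentiableOn ℂ (fun σ => g σ ⬝ᵥ χ σ) (ball c ε \ {c}) :=
    ((differentiableOn_pi.2 hg).mono sdiff_subset).dotProduct fun z hz =>
      (hχ.differentiableAt hz.2).differentiableWithinAt
  rw [matBilinPairing, matBilinPairing, hcongr r₁ h₁ h₁ε, hcongr r₂ h₂ h₂ε,
    circleIntegral_eq_of_differentiableOn_punctured_ball hd h₁ h₁ε h₂ h₂ε]

theorem inv_row_vecMul {A : Matrix (Fin n) (Fin n) ℂ} (hA : A.det ≠ 0) (i : Fin n) :
    A⁻¹ i ᵥ* A = Pi.single i 1 := by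
  rw [show A⁻¹ i = Pi.single i 1 ᵥ* A⁻¹ from (single_one_vecMul i A⁻¹).symm, vecMul_vecMul,
    nonsing_inv_mul _ hA.isUnit, vecMul_one]

theorem mulVec_dotProduct_inv_row {A : Matrix (Fin n) (Fin n) ℂ} (hA : A.det ≠ 0) (v : Fin n → ℂ)
    (i : Fin n) : A *ᵥ v ⬝ᵥ A⁻¹ i = v i := by
  rw [dotProduct_comm, dotProduct_mulVec, inv_row_vecMul hA, single_one_dotProduct]

theorem exists_mem_matKernelSpace_transpose (hε : 0 < ε)
    (hP : ∀ i j, DifferentiableOn ℂ (fun σ => P σ i j) (ball c ε))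
    (hdet : ∀ σ ∈ ball c ε, σ ≠ c → (P σ).det ≠ 0) (k : ℕ) (i : Fin n) :
    ∃ χ ∈ matKernelSpace (ball c ε) (fun σ => (P σ)ᵀ) {c}, ∃ e : ℂ → Fin n → ℂ,
      DifferentiableOn ℂ e (ball c ε) ∧
      ∀ σ ∈ ball c ε, σ ≠ c → χ σ = (σ - c) ^ k • (P σ)⁻¹ i - e σ := by
  obtain ⟨χ, hχ, e, he, hsplit⟩ := exists_inv_smul_eq_principalPart_add isOpen_ball
    (mem_ball_self hε) (differentiableOn_det hP) hdet
    (v := fun σ => (σ - c) ^ k • (P σ).adjugate i)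
    (((differentiableOn_id.sub_const c).pow k).smul (differentiableOn_adjugate_row hP i))
  have hχe : ∀ σ ∈ ball c ε, σ ≠ c → χ σ = (σ - c) ^ k • (P σ)⁻¹ i - e σ := by
    intro σ hσ hσc
    rw [eq_sub_iff_add_eq, ← hsplit σ hσ hσc, Matrix.inv_def, Ring.inverse_eq_inv', smul_comm]
    rfl
  refine ⟨χ, ⟨isSingularFunction_singleton_iff.2 hχ,
    fun σ => (σ - c) ^ k • Pi.single i 1 - (P σ)ᵀ *ᵥ e σ, fun j => ?_, {c}, finite_singleton c,
    fun σ hσ => ?_⟩, e, he, hχe⟩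
  · exact differentiableOn_pi.1 ((((differentiableOn_id.sub_const c).pow k).smul_const _).sub
      (differentiableOn_mulVec (fun i j => hP j i) he)) j
  · beta_reduce
    rw [hχe σ hσ.1 hσ.2, mulVec_sub, mulVec_smul, mulVec_transpose (P σ) ((P σ)⁻¹ i),
      inv_row_vecMul (hdet σ hσ.1 hσ.2)]

theorem matBilinPairing_eq_I_mul_coeff (hr : 0 < r) (hrε : r < ε)
    (hdet : ∀ σ ∈ ball c ε, σ ≠ c → (P σ).det ≠ 0) {φ : ℂ → Fin n → ℂ}
    (hφ : φ ∈ matKernelSpace (ball c ε) P {c}) {m k : ℕ} {a : ℕ → Fin n → ℂ}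
    (ha : ∀ σ, φ σ = ∑ j ∈ Finset.Icc 1 m, (σ - c) ^ (-(j : ℤ)) • a j) (hk : k ∈ Finset.Icc 1 m)
    {i : Fin n} {χ e : ℂ → Fin n → ℂ} (he : DifferentiableOn ℂ e (ball c ε))
    (hχe : ∀ σ ∈ ball c ε, σ ≠ c → χ σ = (σ - c) ^ (k - 1) • (P σ)⁻¹ i - e σ) :
    matBilinPairing P c r φ χ = I * a k i := by
  obtain ⟨-, g, hg, F, hF, hPg⟩ := hφ
  set pp : ℂ → ℂ := fun z => ∑ j ∈ Finset.Icc 1 m, (z - c) ^ (-(j : ℤ)) • a j i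
  have hpp : IsPrincipalPart c pp := ⟨m, fun j => a j i, fun _ => rfl⟩
  have hB : DifferentiableOn ℂ (fun z => g z ⬝ᵥ e z) (ball c ε) :=
    (differentiableOn_pi.2 hg).dotProduct he
  have hint : ∀ z ∈ sphere c r \ F,
      P z *ᵥ φ z ⬝ᵥ χ z = (z - c) ^ (k - 1) • pp z - g z ⬝ᵥ e z := by
    rintro z ⟨hz, hzF⟩
    have hzc : z ≠ c := ne_of_mem_sphere hz hr.ne'
    have hzb : z ∈ ball c ε := sphere_subset_ball hrε hz
    rw [hχe z hzb hzc, dotProduct_sub, dotProduct_smul, mulVec_dotProduct_inv_row (hdet z hzb hzc),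
      hPg z ⟨hzb, hzF⟩, ha z]
    simp [pp, Finset.sum_apply]
  have hcont : ContinuousOn (fun z => (z - c) ^ (k - 1) • pp z) (sphere c r) :=
    ((continuous_id.sub continuous_const).pow _).continuousOn.smul fun z hz =>
      (hpp.differentiableAt (ne_of_mem_sphere hz hr.ne')).continuousAt.continuousWithinAt
  rw [matBilinPairing, circleIntegral_congr_off_countable hr hF.countable hint,
    circleIntegral.integral_sub (hcont.circleIntegrable hr.le)
      ((hB.continuousOn.mono (sphere_subset_ball hrε)).circleIntegrable hr.le),
    circleIntegral_sub_pow_smul_principalPart hr _ hk,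
    circleIntegral_eq_zero_of_differentiableOn_ball hB hr.le hrε]
  have hπ : (π : ℂ) ≠ 0 := ofReal_ne_zero.2 Real.pi_ne_zero
  rw [sub_zero, smul_eq_mul]
  field_simp

theorem eq_zero_of_forall_matBilinPairing_eq_zero (hr : 0 < r) (hrε : r < ε)
    (hP : ∀ i j, DifferentiableOn ℂ (fun σ => P σ i j) (ball c ε))
    (hdet : ∀ σ ∈ ball c ε, σ ≠ c → (P σ).det ≠ 0) {φ : ℂ → Fin n → ℂ}
    (hφ : φ ∈ matKernelSpace (ball c ε) P {c})
    (h : ∀ χ ∈ matKernelSpace (ball c ε) (fun σ => (P σ)ᵀ) {c}, matBilinPairing P c r φ χ = 0) :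
    φ = 0 := by
  obtain ⟨m, a, ha⟩ := isSingularFunction_singleton_iff.1 hφ.1
  have hcoeff : ∀ k ∈ Finset.Icc 1 m, a k = 0 := fun k hk => funext fun i => by
    obtain ⟨χ, hχ, e, he, hχe⟩ :=
      exists_mem_matKernelSpace_transpose (hr.trans hrε) hP hdet (k - 1) i
    simpa [matBilinPairing_eq_I_mul_coeff hr hrε hdet hφ ha hk he hχe] using h χ hχ
  funext σ
  rw [ha σ]
  exact Finset.sum_eq_zero fun k hk => by rw [hcoeff k hk, smul_zero]

end Pairing

theorem statement2_general (n : ℕ) (σ₀ : ℂ) (ε : ℝ) (hε : 0 < ε)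
    (𝔓 : ℂ → Matrix (Fin n) (Fin n) ℂ)
    (hholo : ∀ i j, DifferentiableOn ℂ (fun σ => 𝔓 σ i j) (ball σ₀ ε))
    (hinv : ∀ σ : ℂ, 0 < dist σ σ₀ → dist σ σ₀ < ε → IsUnit (𝔓 σ)) :
    (∀ i j, DifferentiableOn ℂ
        (fun σ => (𝔓 ((starRingEnd ℂ) σ)).conjTranspose i j)
        (ball ((starRingEnd ℂ) σ₀) ε)) ∧
    (∀ φ ∈ matKernelSpace (ball σ₀ ε) 𝔓 {σ₀},
      ∀ ψ ∈ matKernelSpace (ball ((starRingEnd ℂ) σ₀) ε)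
          (fun σ => (𝔓 ((starRingEnd ℂ) σ)).conjTranspose) {(starRingEnd ℂ) σ₀},
        ∀ r₁ r₂ : ℝ, 0 < r₁ → r₁ < ε → 0 < r₂ → r₂ < ε →
          matPairing 𝔓 σ₀ r₁ φ ψ = matPairing 𝔓 σ₀ r₂ φ ψ) ∧
    (∀ φ ∈ matKernelSpace (ball σ₀ ε) 𝔓 {σ₀},
      (∀ ψ ∈ matKernelSpace (ball ((starRingEnd ℂ) σ₀) ε)
          (fun σ => (𝔓 ((starRingEnd ℂ) σ)).conjTranspose) {(starRingEnd ℂ) σ₀},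
        matPairing 𝔓 σ₀ (ε / 2) φ ψ = 0) → φ = 0) ∧
    (∀ ψ ∈ matKernelSpace (ball ((starRingEnd ℂ) σ₀) ε)
        (fun σ => (𝔓 ((starRingEnd ℂ) σ)).conjTranspose) {(starRingEnd ℂ) σ₀},
      (∀ φ ∈ matKernelSpace (ball σ₀ ε) 𝔓 {σ₀},
        matPairing 𝔓 σ₀ (ε / 2) φ ψ = 0) → ψ = 0) := by
  have hdet : ∀ σ ∈ ball σ₀ ε, σ ≠ σ₀ → (𝔓 σ).det ≠ 0 := fun σ hσ hσ₀ =>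
    ((Matrix.isUnit_iff_isUnit_det _).1 (hinv σ (dist_pos.2 hσ₀) hσ)).ne_zero
  have hr : 0 < ε / 2 := half_pos hε
  have hrε : ε / 2 < ε := half_lt_self hε
  refine ⟨fun i j => (hholo j i).conj_conj_ball, ?_, ?_, ?_⟩
  · intro φ hφ ψ hψ _ _
    exact matBilinPairing_eq_of_mem_matKernelSpace hφ
      (isSingularFunction_singleton_iff.1 (conjReflect_mem_matKernelSpace_transpose hψ).1)
  · intro φ hφ h
    refine eq_zero_of_forall_matBilinPairing_eq_zero hr hrε hholo hdet hφ fun χ hχ => ?_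
    simpa [matPairing_eq_matBilinPairing] using
      h _ (conjReflect_mem_matKernelSpace_conjTranspose hχ)
  · intro ψ hψ h
    have hψ0 : conjReflect ψ = 0 := eq_zero_of_forall_matBilinPairing_eq_zero
      (P := fun σ => (𝔓 σ).transpose) hr hrε (fun i j => hholo j i) (by simpa using hdet)
      (conjReflect_mem_matKernelSpace_transpose hψ) fun φ hφ => by
        rw [← matBilinPairing_transpose]
        exact h φ hφ
    rw [← conjReflect_conjReflect ψ, hψ0]
    ext
    simp [conjReflect_apply]

/-- the Green-type pairing between the local kernel spaces of `𝔓` and of its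
adjoint family `𝔔(σ) = 𝔓(σ̄)ᴴ` is independent of the radius and nondegenerate. -/
theorem statement2 (n : ℕ) (hn : 1 ≤ n) (σ₀ : ℂ) (ε : ℝ) (hε : 0 < ε)
    (𝔓 : ℂ → Matrix (Fin n) (Fin n) ℂ)
    (hholo : ∀ i j, DifferentiableOn ℂ (fun σ => 𝔓 σ i j) (ball σ₀ ε))
    (hinv : ∀ σ : ℂ, 0 < dist σ σ₀ → dist σ σ₀ < ε → IsUnit (𝔓 σ)) :
    (∀ i j, DifferentiableOn ℂ
        (fun σ => (𝔓 ((starRingEnd ℂ) σ)).conjTranspose i j)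
        (ball ((starRingEnd ℂ) σ₀) ε)) ∧
    (∀ φ ∈ matKernelSpace (ball σ₀ ε) 𝔓 {σ₀},
      ∀ ψ ∈ matKernelSpace (ball ((starRingEnd ℂ) σ₀) ε)
          (fun σ => (𝔓 ((starRingEnd ℂ) σ)).conjTranspose) {(starRingEnd ℂ) σ₀},
        ∀ r₁ r₂ : ℝ, 0 < r₁ → r₁ < ε → 0 < r₂ → r₂ < ε →
          matPairing 𝔓 σ₀ r₁ φ ψ = matPairing 𝔓 σ₀ r₂ φ ψ) ∧
    (∀ φ ∈ matKernelSpace (ball σ₀ ε) 𝔓 {σ₀},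
      (∀ ψ ∈ matKernelSpace (ball ((starRingEnd ℂ) σ₀) ε)
          (fun σ => (𝔓 ((starRingEnd ℂ) σ)).conjTranspose) {(starRingEnd ℂ) σ₀},
        matPairing 𝔓 σ₀ (ε / 2) φ ψ = 0) → φ = 0) ∧
    (∀ ψ ∈ matKernelSpace (ball ((starRingEnd ℂ) σ₀) ε)
        (fun σ => (𝔓 ((starRingEnd ℂ) σ)).conjTranspose) {(starRingEnd ℂ) σ₀},
      (∀ φ ∈ matKernelSpace (ball σ₀ ε) 𝔓 {σ₀},
        matPairing 𝔓 σ₀ (ε / 2) φ ψ = 0) → ψ = 0) :=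
  statement2_general n σ₀ ε hε 𝔓 hholo hinv
end
end

section
/- Let 𝒟 and H be complex Hilbert spaces, Σ ⊆ ℂ open and connected, and P : Σ → L(𝒟, H) a holomorphic family of bounded operators such that each P(σ) is Fredholm of index 0 and there exists σ₁ ∈ Σ with P(σ₁) bijective. Then the set Z = {σ ∈ Σ : P(σ) is not bijective} is a discrete subset of ℂ and is closed in Σ. -/
open Metric Set Complex

noncomputable section

/-!
At each `σ₀ ∈ Ω`, index `0` lets one map `ker P(σ₀)` isomorphically onto a complement of the
range, giving a finite-rank `C ∘ π` (with `π` a projection onto the kernel) such that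
`S(σ) = P(σ) + C ∘ π` is invertible at, hence near, `σ₀`. Then
`P(σ) = S(σ) ∘ (1 - S(σ)⁻¹ C π)`, and `1 - S(σ)⁻¹ C π` is bijective iff the endomorphism
`1 - π S(σ)⁻¹ C` of the finite-dimensional kernel is, i.e. iff the holomorphic function
`det (1 - π S(σ)⁻¹ C)` does not vanish. By the isolated zeros principle, the set `Z` where
`P(σ)` is not bijective is therefore, near each point of `Ω`, either everything or at most that
point. So the interior of `Z` is closed in the connected set `Ω`; it misses `σ₁`, hence is
empty, and `Z` is discrete and closed in `Ω`.
-/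

open Filter Topology

section Topology

variable {X : Type*} [TopologicalSpace X] {Ω Z : Set X}

theorem IsPreconnected.interior_eq_empty_of_mem_nhds_or_eventually_notMem
    (hΩ : IsPreconnected Ω) (hZΩ : Z ⊆ Ω) (hZ : ∃ x ∈ Ω, x ∉ Z)
    (h : ∀ x ∈ Ω, Z ∈ 𝓝 x ∨ ∀ᶠ y in 𝓝[≠] x, y ∉ Z) : interior Z = ∅ := by
  by_contra hne
  obtain ⟨x₀, hx₀⟩ := Set.nonempty_iff_ne_empty.2 hne
  have hclosed : closure (interior Z) ∩ Ω ⊆ interior Z := by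
    rintro x ⟨hxc, hxΩ⟩
    rcases h x hxΩ with hnhds | hpunct
    · exact mem_interior_iff_mem_nhds.2 hnhds
    · by_contra hx
      have hfreq : ∃ᶠ y in 𝓝[≠] x, y ∈ interior Z :=
        frequently_nhdsWithin_iff.2 <| (mem_closure_iff_frequently.1 hxc).mono
          fun y hy => ⟨hy, fun hyx => hx (hyx ▸ hy)⟩
      obtain ⟨y, hyZ, hy⟩ := (hfreq.and_eventually hpunct).exists
      exact hy (interior_subset hyZ)
  obtain ⟨x, hxΩ, hxZ⟩ := hZ
  exact hxZ <| interior_subset <| hΩ.subset_of_closure_inter_subset isOpen_interior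
    ⟨x₀, hZΩ (interior_subset hx₀), hx₀⟩ hclosed hxΩ

theorem IsPreconnected.isolated_and_closure_inter_subset_of_mem_nhds_or_eventually_notMem
    (hΩ : IsPreconnected Ω) (hZΩ : Z ⊆ Ω) (hZ : ∃ x ∈ Ω, x ∉ Z)
    (h : ∀ x ∈ Ω, Z ∈ 𝓝 x ∨ ∀ᶠ y in 𝓝[≠] x, y ∉ Z) :
    (∀ z ∈ Z, ∃ V ∈ 𝓝 z, V ∩ Z = {z}) ∧ closure Z ∩ Ω ⊆ Z := by
  refine ⟨fun z hz => ?_, fun x ⟨hxc, hxΩ⟩ => ?_⟩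
  · rcases h z (hZΩ hz) with hnhds | hpunct
    · have hz' := mem_interior_iff_mem_nhds.2 hnhds
      rw [hΩ.interior_eq_empty_of_mem_nhds_or_eventually_notMem hZΩ hZ h] at hz'
      exact hz'.elim
    · refine ⟨{y | y ≠ z → y ∉ Z}, eventually_nhdsWithin_iff.1 hpunct, ?_⟩
      ext y
      constructor
      · rintro ⟨hy, hyZ⟩
        by_contra hyz
        exact hy hyz hyZ
      · rintro rfl
        exact ⟨fun hzz => (hzz rfl).elim, hz⟩
  · by_contra hx
    rcases h x hxΩ with hnhds | hpunct
    · exact hx (mem_of_mem_nhds hnhds)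
    · have hnear : ∀ᶠ y in 𝓝 x, y ∉ Z :=
        (eventually_nhdsWithin_iff.1 hpunct).mono fun y hy => by
          by_cases hyx : y = x
          · exact hyx ▸ hx
          · exact hy hyx
      obtain ⟨y, hyZ, hy⟩ := ((mem_closure_iff_frequently.1 hxc).and_eventually hnear).exists
      exact hy hyZ

end Topology

namespace LinearMap

variable {R X Y N : Type*} [Ring R] [AddCommGroup X] [Module R X] [AddCommGroup Y] [Module R Y]
  [AddCommGroup N] [Module R N]

theorem bijective_id_sub_comp_of_bijective_id_sub_comp (B : Y →ₗ[R] X) (p : X →ₗ[R] Y)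
    (h : Function.Bijective (id - B ∘ₗ p : X →ₗ[R] X)) :
    Function.Bijective (id - p ∘ₗ B : Y →ₗ[R] Y) := by
  refine ⟨(injective_iff_map_eq_zero _).2 fun v hv => ?_, fun w => ?_⟩
  · have hv : v = p (B v) := sub_eq_zero.1 hv
    have hBv : B v = 0 := (injective_iff_map_eq_zero _).1 h.1 _ <| by
      simp only [sub_apply, id_apply, comp_apply]
      rw [← hv, sub_self]
    rw [hv, hBv, map_zero]
  · obtain ⟨x, hx⟩ := h.2 (B w)
    refine ⟨w + p x, ?_⟩
    simp only [sub_apply, id_apply, comp_apply, map_add] at hx ⊢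
    rw [← hx, map_sub]
    abel

theorem bijective_id_sub_comp_comm (B : Y →ₗ[R] X) (p : X →ₗ[R] Y) :
    Function.Bijective (id - B ∘ₗ p : X →ₗ[R] X) ↔
      Function.Bijective (id - p ∘ₗ B : Y →ₗ[R] Y) :=
  ⟨bijective_id_sub_comp_of_bijective_id_sub_comp B p,
    bijective_id_sub_comp_of_bijective_id_sub_comp p B⟩

theorem bijective_sub_comp_iff (S : X ≃ₗ[R] Y) (C : N →ₗ[R] Y) (π : X →ₗ[R] N) :
    Function.Bijective (S.toLinearMap - C ∘ₗ π : X →ₗ[R] Y) ↔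
      Function.Bijective (id - π ∘ₗ S.symm.toLinearMap ∘ₗ C : N →ₗ[R] N) := by
  have hfactor : S.toLinearMap - C ∘ₗ π =
      S.toLinearMap ∘ₗ (id - (S.symm.toLinearMap ∘ₗ C) ∘ₗ π) := by
    ext x; simp
  rw [hfactor, coe_comp, LinearEquiv.coe_coe, EquivLike.comp_bijective,
    bijective_id_sub_comp_comm]

theorem bijective_add_comp_of_isCompl_range (T : X →ₗ[R] Y) (π : X →ₗ[R] ker T)
    (hπ : ∀ x : ker T, π x = x) (C : ker T →ₗ[R] Y) (hC : ker C = ⊥)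
    (hcompl : IsCompl (range T) (range C)) : Function.Bijective (T + C ∘ₗ π : X →ₗ[R] Y) := by
  refine ⟨(injective_iff_map_eq_zero _).2 fun x hx => ?_, fun y => ?_⟩
  · have hTx : T x = 0 := by
      refine Submodule.disjoint_def.1 hcompl.disjoint _ (mem_range_self T x) ?_
      rw [eq_neg_of_add_eq_zero_left hx]
      exact neg_mem (mem_range_self C _)
    have hπx : π x = 0 := by
      rw [add_apply, hTx, zero_add] at hx
      exact (ker_eq_bot'.1 hC) _ hx
    simpa [hπ ⟨x, hTx⟩] using congrArg Subtype.val hπx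
  · obtain ⟨_, ⟨a, rfl⟩, _, ⟨k, rfl⟩, rfl⟩ :=
      Submodule.mem_sup.1 (hcompl.sup_eq_top ▸ Submodule.mem_top (x := y))
    refine ⟨a - π a + k, ?_⟩
    have hTk : ∀ k : ker T, T k = 0 := fun k => k.2
    simp [hπ, hTk]

theorem bijective_iff_det_ne_zero {K M : Type*} [Field K] [AddCommGroup M] [Module K M]
    [FiniteDimensional K M] (f : M →ₗ[K] M) : Function.Bijective f ↔ LinearMap.det f ≠ 0 := by
  rw [← Module.End.isUnit_iff, isUnit_iff_isUnit_det, isUnit_iff_ne_zero]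

end LinearMap

theorem FredholmIndexZero.exists_bijective_add_comp {𝒟 H : Type*}
    [NormedAddCommGroup 𝒟] [NormedSpace ℂ 𝒟] [NormedAddCommGroup H] [NormedSpace ℂ H]
    {T : 𝒟 →L[ℂ] H} (hT : FredholmIndexZero T) :
    ∃ (π : 𝒟 →L[ℂ] LinearMap.ker (T : 𝒟 →ₗ[ℂ] H))
      (C : LinearMap.ker (T : 𝒟 →ₗ[ℂ] H) →L[ℂ] H), Function.Bijective (T + C.comp π) := by
  obtain ⟨hker, -, hcoker, hdim⟩ := hT
  obtain ⟨π, hπ⟩ :=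
    Submodule.ClosedComplemented.of_finiteDimensional (LinearMap.ker (T : 𝒟 →ₗ[ℂ] H))
  obtain ⟨L, hL⟩ := Submodule.exists_isCompl (LinearMap.range (T : 𝒟 →ₗ[ℂ] H))
  let e := Submodule.quotientEquivOfIsCompl _ L hL
  have : FiniteDimensional ℂ L := Module.Finite.equiv e
  let J := LinearEquiv.ofFinrankEq _ L (hdim.trans e.finrank_eq)
  let C := L.subtype ∘ₗ J.toLinearMap
  refine ⟨π, LinearMap.toContinuousLinearMap C, ?_⟩
  have hC : LinearMap.ker C = ⊥ := by simp [C, LinearMap.ker_comp]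
  have hrange : LinearMap.range C = L := by simp [C, LinearMap.range_comp]
  exact LinearMap.bijective_add_comp_of_isCompl_range _ π hπ C hC (hrange ▸ hL)

theorem DifferentiableAt.det {𝕜 E N : Type*} [NontriviallyNormedField 𝕜] [CompleteSpace 𝕜]
    [NormedAddCommGroup E] [NormedSpace 𝕜 E] [NormedAddCommGroup N] [NormedSpace 𝕜 N]
    [FiniteDimensional 𝕜 N] {L : E → N →L[𝕜] N} {x : E} (hL : DifferentiableAt 𝕜 L x) :
    DifferentiableAt 𝕜 (fun y => (L y).det) x := by
  let b := Module.finBasis 𝕜 N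
  simp only [ContinuousLinearMap.det, ← LinearMap.det_toMatrix b, Matrix.det_apply,
    LinearMap.toMatrix_apply, ContinuousLinearMap.coe_coe, ← b.equivFunL_apply]
  fun_prop

theorem exists_analyticAt_bijective_iff_ne_zero_of_bijective_add_comp {𝒟 H N : Type*}
    [NormedAddCommGroup 𝒟] [NormedSpace ℂ 𝒟] [CompleteSpace 𝒟]
    [NormedAddCommGroup H] [NormedSpace ℂ H] [CompleteSpace H]
    [NormedAddCommGroup N] [NormedSpace ℂ N] [FiniteDimensional ℂ N]
    {A : ℂ → 𝒟 →L[ℂ] H} {σ₀ : ℂ} (hA : ∀ᶠ σ in 𝓝 σ₀, DifferentiableAt ℂ A σ)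
    (π : 𝒟 →L[ℂ] N) (C : N →L[ℂ] H) (h : Function.Bijective (A σ₀ + C.comp π)) :
    ∃ f : ℂ → ℂ, AnalyticAt ℂ f σ₀ ∧ ∀ᶠ σ in 𝓝 σ₀, (Function.Bijective (A σ) ↔ f σ ≠ 0) := by
  let E := ContinuousLinearEquiv.ofBijective (A σ₀ + C.comp π)
    (LinearMap.ker_eq_bot.2 h.1) (LinearMap.range_eq_top.2 h.2)
  -- `R σ = E⁻¹ S(σ)` lives in the Banach algebra `𝒟 →L[ℂ] 𝒟`, where inversion is holomorphic.
  let R : ℂ → 𝒟 →L[ℂ] 𝒟 := fun σ => (E.symm : H →L[ℂ] 𝒟).comp (A σ + C.comp π)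
  have hR : ∀ᶠ σ in 𝓝 σ₀, DifferentiableAt ℂ R σ :=
    hA.mono fun σ hσ => (differentiableAt_const _).clm_comp (hσ.add_const _)
  have hR₀ : R σ₀ = 1 := by
    ext x
    exact E.symm_apply_apply x
  have hunit : ∀ᶠ σ in 𝓝 σ₀, IsUnit (R σ) :=
    hR.self_of_nhds.continuousAt.eventually_mem (hR₀ ▸ Units.isOpen.mem_nhds isUnit_one)
  refine ⟨fun σ => (1 - π.comp ((Ring.inverse (R σ)).comp ((E.symm : H →L[ℂ] 𝒟).comp C))).det,
    ?_, ?_⟩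
  · refine Complex.analyticAt_iff_eventually_differentiableAt.2 ?_
    filter_upwards [hR, hunit] with σ hσ hu
    exact ((differentiableAt_const _).sub ((differentiableAt_const _).clm_comp
      ((hσ.inverse hu).clm_comp (differentiableAt_const _)))).det
  · filter_upwards [hunit] with σ ⟨u, hu⟩
    let S := (ContinuousLinearEquiv.unitsEquiv ℂ 𝒟 u).trans E
    have hS : A σ = (S : 𝒟 →L[ℂ] H) - C.comp π := by
      ext x
      change A σ x = E ((u : 𝒟 →L[ℂ] 𝒟) x) - C (π x)
      rw [hu]
      exact (sub_eq_of_eq_add (E.apply_symm_apply _)).symm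
    rw [hS]
    refine (LinearMap.bijective_sub_comp_iff S.toLinearEquiv (C : N →ₗ[ℂ] H) π).trans ?_
    rw [LinearMap.bijective_iff_det_ne_zero, ← hu, Ring.inverse_unit]
    rfl

theorem FredholmIndexZero.exists_analyticAt_bijective_iff_ne_zero {𝒟 H : Type*}
    [NormedAddCommGroup 𝒟] [NormedSpace ℂ 𝒟] [CompleteSpace 𝒟]
    [NormedAddCommGroup H] [NormedSpace ℂ H] [CompleteSpace H]
    {P : ℂ → 𝒟 →L[ℂ] H} {σ₀ : ℂ} (hP : ∀ᶠ σ in 𝓝 σ₀, DifferentiableAt ℂ P σ)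
    (hF : FredholmIndexZero (P σ₀)) :
    ∃ f : ℂ → ℂ, AnalyticAt ℂ f σ₀ ∧ ∀ᶠ σ in 𝓝 σ₀, (Function.Bijective (P σ) ↔ f σ ≠ 0) := by
  obtain ⟨π, C, h⟩ := hF.exists_bijective_add_comp
  have : FiniteDimensional ℂ (LinearMap.ker (P σ₀ : 𝒟 →ₗ[ℂ] H)) := hF.1
  exact exists_analyticAt_bijective_iff_ne_zero_of_bijective_add_comp hP π C h

/-- the singular set of a holomorphic Fredholm family of index `0` which is
invertible at some point is discrete and closed in `Ω`. -/
theorem statement7 {𝒟 H : Type*}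
    [NormedAddCommGroup 𝒟] [InnerProductSpace ℂ 𝒟] [CompleteSpace 𝒟]
    [NormedAddCommGroup H] [InnerProductSpace ℂ H] [CompleteSpace H]
    (Ω : Set ℂ) (hΩopen : IsOpen Ω) (hΩconn : IsConnected Ω)
    (P : ℂ → (𝒟 →L[ℂ] H)) (hholo : DifferentiableOn ℂ P Ω)
    (hFred : ∀ σ ∈ Ω, FredholmIndexZero (P σ))
    (σ₁ : ℂ) (hσ₁ : σ₁ ∈ Ω) (hbij : Function.Bijective (P σ₁)) :
    (∀ z ∈ {σ ∈ Ω | ¬ Function.Bijective (P σ)}, ∃ V ∈ nhds z,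
      V ∩ {σ ∈ Ω | ¬ Function.Bijective (P σ)} = {z}) ∧
    closure {σ ∈ Ω | ¬ Function.Bijective (P σ)} ∩ Ω ⊆
      {σ ∈ Ω | ¬ Function.Bijective (P σ)} := by
  refine hΩconn.isPreconnected.isolated_and_closure_inter_subset_of_mem_nhds_or_eventually_notMem
    (fun σ hσ => hσ.1) ⟨σ₁, hσ₁, fun hσ₁Z => hσ₁Z.2 hbij⟩ fun σ hσ => ?_
  obtain ⟨f, hf, hiff⟩ := (hFred σ hσ).exists_analyticAt_bijective_iff_ne_zero
    (hholo.eventually_differentiableAt (hΩopen.mem_nhds hσ))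
  rcases hf.eventually_eq_zero_or_eventually_ne_zero with hzero | hne
  · left
    filter_upwards [hzero, hiff, hΩopen.mem_nhds hσ] with τ hτ hτiff hτΩ
    exact ⟨hτΩ, fun hb => hτiff.1 hb hτ⟩
  · right
    filter_upwards [hne, nhdsWithin_le_nhds hiff] with τ hτ hτiff hτZ
    exact hτZ.2 (hτiff.2 hτ)
end
end

section
/- Let n ≥ 1, let D ⊆ ℂ be open and connected, and let 𝔓 : D → Matrix n n ℂ be holomorphic (entrywise) with 𝔓(σ₁) invertible for some σ₁ ∈ D. Then the set Z = {σ ∈ D : 𝔓(σ) is not invertible} is a discrete subset of ℂ and is closed in D, and the pointwise inverse is meromorphic: for every σ' ∈ Z there exist m ∈ ℕ and ρ > 0 such that the function σ ↦ (σ − σ')^m · 𝔓(σ)⁻¹, defined for σ ∈ B(σ',ρ) ∖ {σ'}, extends to a holomorphic Matrix n n ℂ–valued function on B(σ',ρ). -/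
open Metric Set Complex

noncomputable section

open Filter Topology

/-! Everything reduces to the scalar function `det 𝔓`, holomorphic on `D` and nonzero at `σ₁`.
By the identity theorem its zeros are isolated and of finite order, and where
`det 𝔓(σ) = (σ - σ')^m h(σ)` with `h` nonvanishing, Cramer's rule gives
`(σ - σ')^m 𝔓(σ)⁻¹ = h(σ)⁻¹ adj 𝔓(σ)`, which is holomorphic. -/

section MatrixCalculus

variable {𝕜 ι : Type*} [NontriviallyNormedField 𝕜] [Fintype ι] [DecidableEq ι]
  {M : 𝕜 → Matrix ι ι 𝕜} {s : Set 𝕜}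

theorem differentiableOn_det_s8 (hM : ∀ i j, DifferentiableOn 𝕜 (fun x => M x i j) s) :
    DifferentiableOn 𝕜 (fun x => (M x).det) s := by
  simp only [Matrix.det_apply']
  exact DifferentiableOn.fun_sum fun p _ =>
    (DifferentiableOn.fun_finsetProd fun i _ => hM (p i) i).const_mul _

theorem differentiableOn_adjugate_apply (hM : ∀ i j, DifferentiableOn 𝕜 (fun x => M x i j) s)
    (i j : ι) : DifferentiableOn 𝕜 (fun x => (M x).adjugate i j) s := by
  simp only [Matrix.adjugate_apply]
  refine differentiableOn_det_s8 fun k l => ?_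
  by_cases hk : k = j
  · simp [Matrix.updateRow_apply, hk]
  · simpa only [Matrix.updateRow_apply, hk, if_false] using hM k l

end MatrixCalculus

theorem Matrix.smul_inv_eq_inv_smul_adjugate {K ι : Type*} [Field K] [Fintype ι] [DecidableEq ι]
    {A : Matrix ι ι K} {c d : K} (hdet : A.det = c * d) (hc : c ≠ 0) :
    c • A⁻¹ = d⁻¹ • A.adjugate := by
  rw [Matrix.inv_def, Ring.inverse_eq_inv', hdet, smul_smul, mul_inv, ← mul_assoc,
    mul_inv_cancel₀ hc, one_mul]

theorem exists_mem_nhds_inter_eq_singleton {X : Type*} [TopologicalSpace X] {S : Set X} {z : X}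
    (hz : z ∈ S) (h : ∀ᶠ w in 𝓝[≠] z, w ∉ S) : ∃ V ∈ 𝓝 z, V ∩ S = {z} := by
  refine ⟨{w | w ≠ z → w ∉ S}, eventually_nhdsWithin_iff.mp h, ?_⟩
  ext w
  constructor
  · rintro ⟨hwV, hwS⟩
    by_contra hwz
    exact hwV hwz hwS
  · rintro rfl
    exact ⟨fun h => (h rfl).elim, hz⟩

theorem ContinuousOn.closure_sep_inter_subset {X Y : Type*} [TopologicalSpace X]
    [TopologicalSpace Y] {f : X → Y} {D : Set X} {t : Set Y} (hf : ContinuousOn f D)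
    (ht : IsClosed t) : closure {x ∈ D | f x ∈ t} ∩ D ⊆ {x ∈ D | f x ∈ t} := by
  rintro x ⟨hx, hxD⟩
  refine ⟨hxD, ht.closure_subset ?_⟩
  exact ((hf x hxD).mono fun y hy => hy.1).mem_closure hx fun y hy => hy.2

section Analytic

variable {𝕜 E : Type*} [NontriviallyNormedField 𝕜] [NormedAddCommGroup E] [NormedSpace 𝕜 E]
  {f : 𝕜 → E}

theorem AnalyticOnNhd.eventually_nhdsNE_ne_zero {U : Set 𝕜} {x z : 𝕜}
    (hf : AnalyticOnNhd 𝕜 f U) (hU : IsPreconnected U) (hx : x ∈ U) (hfx : f x ≠ 0) (hz : z ∈ U) :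
    ∀ᶠ w in 𝓝[≠] z, f w ≠ 0 :=
  (hf z hz).eventually_eq_zero_or_eventually_ne_zero.resolve_left fun h =>
    hfx (hf.eqOn_zero_of_preconnected_of_eventuallyEq_zero hU hz h hx)

theorem AnalyticAt.exists_eventually_eq_pow_smul [CompleteSpace E] {z : 𝕜} (hf : AnalyticAt 𝕜 f z)
    (hord : analyticOrderAt f z ≠ ⊤) :
    ∃ g : 𝕜 → E, ∀ᶠ w in 𝓝 z,
      AnalyticAt 𝕜 g w ∧ g w ≠ 0 ∧ f w = (w - z) ^ analyticOrderNatAt f z • g w := by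
  obtain ⟨g, hg, hgz, hfg⟩ := hf.analyticOrderAt_ne_top.mp hord
  exact ⟨g, hg.eventually_analyticAt.and ((hg.continuousAt.eventually_ne hgz).and hfg)⟩

end Analytic

theorem exists_differentiableOn_eq_pow_smul_inv {n : Type*} [Fintype n] [DecidableEq n]
    {P : ℂ → Matrix n n ℂ} {B : Set ℂ} (hP : ∀ i j, DifferentiableOn ℂ (fun σ => P σ i j) B)
    {c : ℂ} {m : ℕ} {h : ℂ → ℂ} (hh : DifferentiableOn ℂ h B) (hh0 : ∀ σ ∈ B, h σ ≠ 0)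
    (hdet : ∀ σ ∈ B, (P σ).det = (σ - c) ^ m * h σ) :
    ∃ g : ℂ → Matrix n n ℂ, (∀ i j, DifferentiableOn ℂ (fun σ => g σ i j) B) ∧
      ∀ σ ∈ B \ {c}, g σ = (σ - c) ^ m • (P σ)⁻¹ := by
  refine ⟨fun σ => (h σ)⁻¹ • (P σ).adjugate, fun i j => ?_, fun σ ⟨hσ, hσc⟩ => ?_⟩
  · simpa only [Matrix.smul_apply, smul_eq_mul] using
      (hh.fun_inv hh0).fun_mul (differentiableOn_adjugate_apply hP i j)
  · exact (Matrix.smul_inv_eq_inv_smul_adjugate (hdet σ hσ)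
      (pow_ne_zero _ (sub_ne_zero.mpr hσc))).symm

theorem statement8_general (n : ℕ) (D : Set ℂ) (hD : IsOpen D) (hDconn : IsConnected D)
    (𝔓 : ℂ → Matrix (Fin n) (Fin n) ℂ)
    (hholo : ∀ i j, DifferentiableOn ℂ (fun σ => 𝔓 σ i j) D)
    (σ₁ : ℂ) (hσ₁ : σ₁ ∈ D) (hinv : IsUnit (𝔓 σ₁)) :
    (∀ z ∈ {σ ∈ D | ¬ IsUnit (𝔓 σ)}, ∃ V ∈ nhds z,
      V ∩ {σ ∈ D | ¬ IsUnit (𝔓 σ)} = {z}) ∧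
    closure {σ ∈ D | ¬ IsUnit (𝔓 σ)} ∩ D ⊆ {σ ∈ D | ¬ IsUnit (𝔓 σ)} ∧
    ∀ σ' ∈ {σ ∈ D | ¬ IsUnit (𝔓 σ)}, ∃ (m : ℕ) (ρ : ℝ), 0 < ρ ∧ ball σ' ρ ⊆ D ∧
      ∃ g : ℂ → Matrix (Fin n) (Fin n) ℂ,
        (∀ i j, DifferentiableOn ℂ (fun σ => g σ i j) (ball σ' ρ)) ∧
        ∀ σ ∈ ball σ' ρ \ {σ'}, g σ = (σ - σ') ^ m • (𝔓 σ)⁻¹ := by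
  have hZ : {σ ∈ D | ¬ IsUnit (𝔓 σ)} = {σ ∈ D | (𝔓 σ).det ∈ ({0} : Set ℂ)} := by
    simp only [Matrix.isUnit_iff_isUnit_det, isUnit_iff_ne_zero, not_not, mem_singleton_iff]
  have hdet : DifferentiableOn ℂ (fun σ => (𝔓 σ).det) D := differentiableOn_det_s8 hholo
  have hana : AnalyticOnNhd ℂ (fun σ => (𝔓 σ).det) D := hdet.analyticOnNhd hD
  have hdet₁ : (𝔓 σ₁).det ≠ 0 := isUnit_iff_ne_zero.mp ((Matrix.isUnit_iff_isUnit_det _).mp hinv)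
  rw [hZ]
  refine ⟨fun z hz => exists_mem_nhds_inter_eq_singleton hz ?_,
    hdet.continuousOn.closure_sep_inter_subset isClosed_singleton, fun σ' hσ' => ?_⟩
  · exact (hana.eventually_nhdsNE_ne_zero hDconn.isPreconnected hσ₁ hdet₁ hz.1).mono
      fun w hw hwZ => hw hwZ.2
  · have hord := hana.analyticOrderAt_ne_top_of_isPreconnected hDconn.isPreconnected hσ₁ hσ'.1
      ((hana σ₁ hσ₁).analyticOrderAt_eq_zero.mpr hdet₁ ▸ ENat.zero_ne_top)
    obtain ⟨h, hh⟩ := (hana σ' hσ'.1).exists_eventually_eq_pow_smul hord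
    obtain ⟨ρ, hρ, hball⟩ := eventually_nhds_iff_ball.mp (hh.and (hD.mem_nhds hσ'.1))
    have hBD : ball σ' ρ ⊆ D := fun σ hσ => (hball σ hσ).2
    exact ⟨_, ρ, hρ, hBD,
      exists_differentiableOn_eq_pow_smul_inv (fun i j => (hholo i j).mono hBD)
      (fun σ hσ => (hball σ hσ).1.1.differentiableAt.differentiableWithinAt)
      (fun σ hσ => (hball σ hσ).1.2.1) (fun σ hσ => (hball σ hσ).1.2.2)⟩

/-- for a holomorphic matrix family invertible somewhere on a connected open set,
the noninvertibility set is discrete and closed in `D`, and the inverse is meromorphic. -/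
theorem statement8 (n : ℕ) (hn : 1 ≤ n) (D : Set ℂ) (hD : IsOpen D) (hDconn : IsConnected D)
    (𝔓 : ℂ → Matrix (Fin n) (Fin n) ℂ)
    (hholo : ∀ i j, DifferentiableOn ℂ (fun σ => 𝔓 σ i j) D)
    (σ₁ : ℂ) (hσ₁ : σ₁ ∈ D) (hinv : IsUnit (𝔓 σ₁)) :
    (∀ z ∈ {σ ∈ D | ¬ IsUnit (𝔓 σ)}, ∃ V ∈ nhds z,
      V ∩ {σ ∈ D | ¬ IsUnit (𝔓 σ)} = {z}) ∧
    closure {σ ∈ D | ¬ IsUnit (𝔓 σ)} ∩ D ⊆ {σ ∈ D | ¬ IsUnit (𝔓 σ)} ∧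
    ∀ σ' ∈ {σ ∈ D | ¬ IsUnit (𝔓 σ)}, ∃ (m : ℕ) (ρ : ℝ), 0 < ρ ∧ ball σ' ρ ⊆ D ∧
      ∃ g : ℂ → Matrix (Fin n) (Fin n) ℂ,
        (∀ i j, DifferentiableOn ℂ (fun σ => g σ i j) (ball σ' ρ)) ∧
        ∀ σ ∈ ball σ' ρ \ {σ'}, g σ = (σ - σ') ^ m • (𝔓 σ)⁻¹ :=
  statement8_general n D hD hDconn 𝔓 hholo σ₁ hσ₁ hinv
end
end

section
/- Let U be a topological space, y₀ ∈ U, σ₀ ∈ ℂ, 0 < ρ < ε, let E be a complex Banach space, and let φ₁, …, φ_N : U × ℂ → E be functions such that: (i) for every y ∈ U and every i, the function φ_i(y,·) is a singular function with poles in closedBall(σ₀,ρ); (ii) each φ_i is continuous on U × A, where A = {σ ∈ ℂ : ρ < |σ − σ₀| < ε}. If the functions φ₁(y₀,·), …, φ_N(y₀,·) are linearly independent over ℂ, then there is a neighborhood U' of y₀ in U such that for every y ∈ U' the functions φ₁(y,·), …, φ_N(y,·) are linearly independent over ℂ. -/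
/-!
A nonzero combination `∑ cᵢ φᵢ(y₀, ·)` is again a singular function, so it cannot vanish on the
annulus: it is analytic on the connected complement of its finitely many poles, so by the identity
theorem it would vanish off the poles; then each principal part would have a finite limit at its
pole, which forces all its coefficients to be zero. Hence every unit coefficient vector `c` is
detected at some point of the annulus, and by continuity that point still detects `c'` for the
functions at `y` whenever `(y, c')` is close to `(y₀, c)`. Compactness of the unit sphere of
coefficients makes the neighbourhood of `y₀` uniform in `c`.
-/

open Metric Set Complex

noncomputable section

open Filter Topology

section PrincipalParts

variable {E : Type*} [AddCommGroup E] [Module ℂ E]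

def principalPartOf (c : ℂ) (m : ℕ) : (ℕ → E) →ₗ[ℂ] ℂ → E where
  toFun a σ := ∑ k ∈ Finset.Icc 1 m, (σ - c) ^ (-(k : ℤ)) • a k
  map_add' a b := by ext σ; simp [Finset.sum_add_distrib]
  map_smul' r a := by ext σ; simp [Finset.smul_sum, smul_comm r]

lemma principalPartOf_apply (c σ : ℂ) (m : ℕ) (a : ℕ → E) :
    principalPartOf c m a σ = ∑ k ∈ Finset.Icc 1 m, (σ - c) ^ (-(k : ℤ)) • a k := rfl

lemma principalPartOf_indicator {c : ℂ} {m M : ℕ} (h : m ≤ M) (a : ℕ → E) :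
    principalPartOf c M ((Finset.Icc 1 m : Set ℕ).indicator a) = principalPartOf c m a := by
  ext σ
  rw [principalPartOf_apply, principalPartOf_apply,
    ← Finset.sum_indicator_subset _ (Finset.Icc_subset_Icc_right h)]
  exact Finset.sum_congr rfl fun k _ =>
    (Set.indicator_smul_apply _ (fun k : ℕ => (σ - c) ^ (-(k : ℤ))) a k).symm

variable (E) in
def principalParts (c : ℂ) : Submodule ℂ (ℂ → E) where
  carrier := {φ | ∃ m a, principalPartOf c m a = φ}
  zero_mem' := ⟨0, 0, map_zero _⟩
  add_mem' := by
    rintro _ _ ⟨m₁, a₁, rfl⟩ ⟨m₂, a₂, rfl⟩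
    refine ⟨max m₁ m₂, (Finset.Icc 1 m₁ : Set ℕ).indicator a₁ +
      (Finset.Icc 1 m₂ : Set ℕ).indicator a₂, ?_⟩
    rw [map_add, principalPartOf_indicator (le_max_left _ _),
      principalPartOf_indicator (le_max_right _ _)]
  smul_mem' := by
    rintro r _ ⟨m, a, rfl⟩
    exact ⟨m, r • a, map_smul _ r a⟩

lemma mem_principalParts {c : ℂ} {φ : ℂ → E} :
    φ ∈ principalParts E c ↔ IsPrincipalPart c φ := by
  change (∃ m a, principalPartOf c m a = φ) ↔ _
  simp only [IsPrincipalPart, funext_iff, principalPartOf_apply, eq_comm]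

variable (E) in
def singularFunctions (S : Set ℂ) : Submodule ℂ (ℂ → E) where
  carrier := {φ | ∃ (F : Finset ℂ) (p : ℂ → ℂ → E), ↑F ⊆ S ∧
    (∀ c ∈ F, p c ∈ principalParts E c) ∧ ∑ c ∈ F, p c = φ}
  zero_mem' := ⟨∅, 0, by simp, by simp, by simp⟩
  add_mem' := by
    classical
    rintro _ _ ⟨F₁, p₁, hF₁, hp₁, rfl⟩ ⟨F₂, p₂, hF₂, hp₂, rfl⟩
    refine ⟨F₁ ∪ F₂, (F₁ : Set ℂ).indicator p₁ + (F₂ : Set ℂ).indicator p₂,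
      by simpa using union_subset hF₁ hF₂, fun c _ => add_mem ?_ ?_, ?_⟩
    · by_cases hc : c ∈ F₁ <;> simp [hc, hp₁]
    · by_cases hc : c ∈ F₂ <;> simp [hc, hp₂]
    · simp only [Pi.add_apply]
      rw [Finset.sum_add_distrib,
        Finset.sum_indicator_subset _ Finset.subset_union_left,
        Finset.sum_indicator_subset _ Finset.subset_union_right]
  smul_mem' := by
    rintro r _ ⟨F, p, hF, hp, rfl⟩
    exact ⟨F, r • p, hF, fun c hc => Submodule.smul_mem _ r (hp c hc), by
      simp [Finset.smul_sum]⟩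

lemma mem_singularFunctions {S : Set ℂ} {φ : ℂ → E} :
    φ ∈ singularFunctions E S ↔ IsSingularFunction S φ := by
  change (∃ (F : Finset ℂ) (p : ℂ → ℂ → E), _ ∧ _ ∧ ∑ c ∈ F, p c = φ) ↔ _
  simp only [IsSingularFunction, mem_principalParts, funext_iff, Finset.sum_apply,
    eq_comm]

end PrincipalParts

section Analytic

variable {E : Type*} [NormedAddCommGroup E] [NormedSpace ℂ E]

lemma analyticAt_principalPartOf {c σ : ℂ} (hσ : σ ≠ c) (m : ℕ) (a : ℕ → E) :
    AnalyticAt ℂ (principalPartOf c m a) σ := by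
  have hsub : σ - c ≠ 0 := sub_ne_zero.2 hσ
  show AnalyticAt ℂ (fun τ => ∑ k ∈ Finset.Icc 1 m, (τ - c) ^ (-(k : ℤ)) • a k) σ
  have hlin : AnalyticAt ℂ (fun τ : ℂ => τ - c) σ := analyticAt_id.sub analyticAt_const
  exact Finset.analyticAt_fun_sum _ fun k _ => (hlin.zpow hsub).smul analyticAt_const

lemma analyticAt_sum_of_mem_principalParts {F : Finset ℂ} {p : ℂ → ℂ → E}
    (hp : ∀ c ∈ F, p c ∈ principalParts E c) {σ : ℂ} (hσ : σ ∉ F) :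
    AnalyticAt ℂ (∑ c ∈ F, p c) σ := by
  refine Finset.analyticAt_sum _ fun c hc => ?_
  obtain ⟨m, a, hma⟩ := hp c hc
  exact hma ▸ analyticAt_principalPartOf (ne_of_mem_of_not_mem hc hσ).symm m a

lemma tendsto_pow_smul_principalPartOf (c : ℂ) (m : ℕ) (a : ℕ → E) :
    Tendsto (fun σ => (σ - c) ^ (m + 1) • principalPartOf c (m + 1) a σ) (𝓝[≠] c)
      (𝓝 (a (m + 1))) := by
  set g : ℂ → E := fun σ => ∑ k ∈ Finset.Icc 1 (m + 1), (σ - c) ^ (m + 1 - k) • a k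
  have hgc : g c = a (m + 1) := by
    simp only [g]
    rw [Finset.sum_eq_single_of_mem (m + 1) (by simp)]
    · simp
    · intro k hk hkm
      have : m + 1 - k ≠ 0 := by simp only [Finset.mem_Icc] at hk; omega
      simp [this]
  have hg : Continuous g := by fun_prop
  refine (hgc ▸ hg.continuousAt.tendsto.mono_left nhdsWithin_le_nhds).congr' ?_
  filter_upwards [self_mem_nhdsWithin] with σ hσ
  have hσc : σ - c ≠ 0 := sub_ne_zero.2 hσ
  simp only [g, principalPartOf_apply, Finset.smul_sum, smul_smul]
  refine Finset.sum_congr rfl fun k hk => ?_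
  have hk : k ≤ m + 1 := (Finset.mem_Icc.1 hk).2
  rw [← zpow_natCast, ← zpow_natCast, ← zpow_add₀ hσc, Nat.cast_sub hk]
  ring_nf

lemma principalPartOf_eq_zero_of_tendsto {c : ℂ} {m : ℕ} {a : ℕ → E} {b : E}
    (h : Tendsto (principalPartOf c m a) (𝓝[≠] c) (𝓝 b)) : principalPartOf c m a = 0 := by
  induction m generalizing b with
  | zero => ext σ; simp [principalPartOf_apply]
  | succ m ih =>
    have hpow : Tendsto (fun σ : ℂ => (σ - c) ^ (m + 1)) (𝓝[≠] c) (𝓝 0) := by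
      have : Continuous (fun σ : ℂ => (σ - c) ^ (m + 1)) := by fun_prop
      simpa using this.continuousAt.tendsto.mono_left (nhdsWithin_le_nhds (a := c))
    have htop : a (m + 1) = 0 := by
      have := hpow.smul h
      rw [zero_smul] at this
      exact tendsto_nhds_unique (tendsto_pow_smul_principalPartOf c m a) this
    have hdrop : principalPartOf c (m + 1) a = principalPartOf c m a := by
      ext σ
      rw [principalPartOf_apply, principalPartOf_apply, Finset.sum_Icc_succ_top (by omega), htop,
        smul_zero, add_zero]
    rw [hdrop] at h ⊢
    exact ih h

lemma sum_principalParts_eq_zero_of_eqOn_compl {F : Finset ℂ} {p : ℂ → ℂ → E}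
    (hp : ∀ c ∈ F, p c ∈ principalParts E c) (h : EqOn (∑ c ∈ F, p c) 0 (↑F)ᶜ) :
    ∑ c ∈ F, p c = 0 := by
  classical
  refine Finset.sum_eq_zero fun c hc => ?_
  obtain ⟨m, a, hma⟩ := hp c hc
  rw [← hma]
  refine principalPartOf_eq_zero_of_tendsto (b := -(∑ d ∈ F.erase c, p d) c) ?_
  have hrest : ContinuousAt (∑ d ∈ F.erase c, p d) c :=
    (analyticAt_sum_of_mem_principalParts (fun d hd => hp d (Finset.mem_of_mem_erase hd))
      (Finset.notMem_erase c F)).continuousAt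
  have hoff : ∀ᶠ σ in 𝓝[≠] c, σ ∉ F :=
    Filter.mem_of_superset (nhdsNE_of_nhdsNE_sdiff_finite self_mem_nhdsWithin inferInstance)
      fun σ hσ => hσ.2
  refine (hrest.tendsto.mono_left nhdsWithin_le_nhds).neg.congr' ?_
  filter_upwards [hoff] with σ hσ
  have := h hσ
  rw [← Finset.add_sum_erase F _ hc] at this
  simp only [Pi.add_apply, Finset.sum_apply, Pi.zero_apply] at this ⊢
  rw [hma]
  exact neg_eq_of_add_eq_zero_left this

theorem eq_zero_of_mem_singularFunctions_of_eventuallyEq_zero {S : Set ℂ} {φ : ℂ → E}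
    (hφ : φ ∈ singularFunctions E S) {z : ℂ} (hz : z ∉ S) (h : φ =ᶠ[𝓝 z] 0) : φ = 0 := by
  obtain ⟨F, p, hFS, hp, rfl⟩ := hφ
  have hconn : IsPreconnected (↑F : Set ℂ)ᶜ :=
    (F.finite_toSet.countable.isConnected_compl_of_one_lt_rank (by simp)).isPreconnected
  refine sum_principalParts_eq_zero_of_eqOn_compl hp ?_
  exact AnalyticOnNhd.eqOn_zero_of_preconnected_of_eventuallyEq_zero
    (fun σ hσ => analyticAt_sum_of_mem_principalParts hp hσ) hconn (fun hzF => hz (hFS hzF)) h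

end Analytic

section Perturbation

variable {𝕜 : Type*} [RCLike 𝕜] {ι : Type*} [Fintype ι]

lemma linearIndependent_of_forall_mem_sphere {V : Type*} [AddCommGroup V] [Module 𝕜 V]
    {v : ι → V} (h : ∀ c ∈ sphere (0 : ι → 𝕜) 1, ∑ i, c i • v i ≠ 0) :
    LinearIndependent 𝕜 v := by
  refine Fintype.linearIndependent_iff.2 fun c hc => ?_
  suffices c = 0 by simp [this]
  by_contra hc0
  refine h ((‖c‖⁻¹ : 𝕜) • c) (by simpa using norm_smul_inv_norm hc0) ?_
  simp [mul_smul, ← Finset.smul_sum, hc]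

theorem eventually_linearIndependent_of_continuousAt {X Z E : Type*} [TopologicalSpace X]
    [NormedAddCommGroup E] [NormedSpace 𝕜 E] {v : X → ι → Z → E} {y₀ : X}
    (hv : ∀ i z, ContinuousAt (fun y => v y i z) y₀) (hli : LinearIndependent 𝕜 (v y₀)) :
    ∀ᶠ y in 𝓝 y₀, LinearIndependent 𝕜 (v y) := by
  refine ((isCompact_sphere (0 : ι → 𝕜) 1).eventually_forall_of_forall_eventually
    fun c hc => ?_).mono fun y hy => linearIndependent_of_forall_mem_sphere hy
  have hne : ∑ i, c i • v y₀ i ≠ 0 := by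
    intro h0
    have hc0 : c = 0 := funext (Fintype.linearIndependent_iff.1 hli c h0)
    simp [hc0] at hc
  obtain ⟨z, hz⟩ := Function.ne_iff.1 hne
  have hcont : ContinuousAt (fun q : X × (ι → 𝕜) => ∑ i, q.2 i • v q.1 i z) (y₀, c) := by
    exact tendsto_finsetSum _ fun i _ =>
      ((continuous_apply i).continuousAt.comp continuousAt_snd).smul (hv i z).fst'
  filter_upwards [hcont.eventually_ne (by simpa [Finset.sum_apply] using hz)] with q hq hsum
  exact hq (by simpa [Finset.sum_apply] using congrFun hsum z)

end Perturbation

theorem statement9_general {X : Type*} [TopologicalSpace X] (y₀ : X) (σ₀ : ℂ) (ρ ε : ℝ)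
    (hρ : 0 < ρ) (hρε : ρ < ε)
    {E : Type*} [NormedAddCommGroup E] [NormedSpace ℂ E]
    (N : ℕ) (φ : Fin N → X → ℂ → E)
    (hsing : ∀ y : X, ∀ i, IsSingularFunction (closedBall σ₀ ρ) (φ i y))
    (hcont : ∀ i, ContinuousOn (fun p : X × ℂ => φ i p.1 p.2)
      ((univ : Set X) ×ˢ {σ : ℂ | ρ < dist σ σ₀ ∧ dist σ σ₀ < ε}))
    (hli : LinearIndependent ℂ (fun i => φ i y₀)) :
    ∃ U' ∈ nhds y₀, ∀ y ∈ U', LinearIndependent ℂ (fun i => φ i y) := by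
  set A : Set ℂ := {σ : ℂ | ρ < dist σ σ₀ ∧ dist σ σ₀ < ε}
  have hA : IsOpen A := (isOpen_lt continuous_const (continuous_id.dist continuous_const)).inter
    (isOpen_lt (continuous_id.dist continuous_const) continuous_const)
  set z : ℂ := σ₀ + ((ρ + ε) / 2 : ℝ)
  have hz : dist z σ₀ = (ρ + ε) / 2 := by
    rw [Complex.dist_eq, add_sub_cancel_left, Complex.norm_real, Real.norm_of_nonneg (by linarith)]
  have hzA : z ∈ A := ⟨by linarith, by linarith⟩
  have hzS : z ∉ closedBall σ₀ ρ := by simp [mem_closedBall, hz]; linarith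
  let restrict : (ℂ → E) →ₗ[ℂ] A → E := LinearMap.funLeft ℂ E Subtype.val
  have hli_A : LinearIndependent ℂ (restrict ∘ fun i => φ i y₀) := by
    refine hli.map (Submodule.disjoint_def.2 fun f hf hker => ?_)
    have hf : f ∈ singularFunctions E (closedBall σ₀ ρ) := Submodule.span_le.2
      (range_subset_iff.2 fun i => mem_singularFunctions.2 (hsing y₀ i)) hf
    refine eq_zero_of_mem_singularFunctions_of_eventuallyEq_zero hf hzS ?_
    filter_upwards [hA.mem_nhds hzA] with σ hσ
    exact congrFun hker ⟨σ, hσ⟩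
  have hcont_A : ∀ i (s : A), ContinuousAt (fun y => φ i y s) y₀ := fun i s =>
    ((hcont i).continuousAt ((isOpen_univ.prod hA).mem_nhds ⟨trivial, s.2⟩)).comp
      (Continuous.prodMk_left (s : ℂ)).continuousAt
  exact ⟨_, eventually_linearIndependent_of_continuousAt hcont_A hli_A,
    fun y hy => LinearIndependent.of_comp restrict hy⟩

/-- a family of singular functions with poles in a fixed compact disc, continuous
on an annulus around it and linearly independent at `y₀`, stays linearly independent nearby. -/
theorem statement9 {X : Type*} [TopologicalSpace X] (y₀ : X) (σ₀ : ℂ) (ρ ε : ℝ)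
    (hρ : 0 < ρ) (hρε : ρ < ε)
    {E : Type*} [NormedAddCommGroup E] [NormedSpace ℂ E] [CompleteSpace E]
    (N : ℕ) (φ : Fin N → X → ℂ → E)
    (hsing : ∀ y : X, ∀ i, IsSingularFunction (closedBall σ₀ ρ) (φ i y))
    (hcont : ∀ i, ContinuousOn (fun p : X × ℂ => φ i p.1 p.2)
      ((univ : Set X) ×ˢ {σ : ℂ | ρ < dist σ σ₀ ∧ dist σ σ₀ < ε}))
    (hli : LinearIndependent ℂ (fun i => φ i y₀)) :
    ∃ U' ∈ nhds y₀, ∀ y ∈ U', LinearIndependent ℂ (fun i => φ i y) :=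
  statement9_general y₀ σ₀ ρ ε hρ hρε N φ hsing hcont hli
end
end

section
/- Let U be a connected topological space, σ₀ ∈ ℂ, ε > 0, and let q : U × ℂ → ℂ be continuous on U × closedBall(σ₀,ε), with σ ↦ q(y,σ) holomorphic on B(σ₀,ε) for each y ∈ U, and with q(y,σ) ≠ 0 for all y ∈ U whenever ε/2 ≤ |σ − σ₀| ≤ ε. Then for every y ∈ U the zero set Z_y = {σ ∈ B(σ₀,ε) : q(y,σ) = 0} is a finite subset of B(σ₀,ε/2), and the total number of zeros counted with multiplicity, Σ_{z ∈ Z_y} ord_z(q(y,·)), is independent of y ∈ U, where ord_z(q(y,·)) denotes the unique d ∈ ℕ such that q(y,σ) = (σ − z)^d h(σ) for some h holomorphic near z with h(z) ≠ 0. -/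
open Metric Set Complex

noncomputable section

/-!
Fix `y` and let `C` be the circle `|σ - σ₀| = ε/2`, on which no `q y` vanishes. By the argument
principle, `∮_C (q y)'/(q y)` is `2πi` times the number of zeros of `q y` in `B(σ₀, ε/2)`, counted
with multiplicity; it is proved by dividing out the zeros one at a time, each factor `(σ - z)^m`
contributing `2πi m`. By compactness of `C` and continuity of `q`, `‖q y - q y₁‖ < ‖q y₁‖` on `C`
for `y` near `y₁`, and then (Rouché) the two integrals agree. So the integral is locally constant,
hence constant on the connected space `X`.
-/

open Filter Topology
open scoped Real

theorem DifferentiableOn.exists_eq_pow_analyticOrderNatAt_mul {f : ℂ → ℂ} {U : Set ℂ} {z : ℂ}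
    (hf : DifferentiableOn ℂ f U) (hU : IsOpen U) (hz : z ∈ U)
    (hord : analyticOrderAt f z ≠ ⊤) :
    ∃ g : ℂ → ℂ, DifferentiableOn ℂ g U ∧ g z ≠ 0 ∧
      f = fun σ => (σ - z) ^ analyticOrderNatAt f z * g σ := by
  set m := analyticOrderNatAt f z
  obtain ⟨h, han, hz0, hfh⟩ := ((hf.analyticOnNhd hU) z hz).analyticOrderAt_ne_top.1 hord
  have hpow : ∀ {σ}, σ ≠ z → (σ - z) ^ m ≠ 0 := fun hσ => pow_ne_zero _ (sub_ne_zero.2 hσ)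
  set g := Function.update (fun σ => f σ / (σ - z) ^ m) z (h z)
  have hgh : g =ᶠ[𝓝 z] h := by
    filter_upwards [hfh] with σ hσ
    rcases eq_or_ne σ z with rfl | hσz
    · simp [g]
    · simp only [g, Function.update_of_ne hσz, hσ, smul_eq_mul]
      exact mul_div_cancel_left₀ _ (hpow hσz)
  refine ⟨g, fun σ hσ => ?_, by simpa [g] using hz0, funext fun σ => ?_⟩
  · rcases eq_or_ne σ z with rfl | hσz
    · exact (han.differentiableAt.congr_of_eventuallyEq hgh).differentiableWithinAt
    · have hg : g =ᶠ[𝓝 σ] fun w => f w / (w - z) ^ m := by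
        filter_upwards [eventually_ne_nhds hσz] with w hw using Function.update_of_ne hw _ _
      exact (((hf.differentiableAt (hU.mem_nhds hσ)).div (by fun_prop)
        (hpow hσz)).congr_of_eventuallyEq hg).differentiableWithinAt
  · rcases eq_or_ne σ z with rfl | hσz
    · simpa [g] using hfh.self_of_nhds
    · simp [g, hσz, mul_div_cancel₀ _ (hpow hσz)]

theorem DifferentiableOn.differentiableAt_logDeriv {f : ℂ → ℂ} {U : Set ℂ} {z : ℂ}
    (hf : DifferentiableOn ℂ f U) (hU : IsOpen U) (hz : z ∈ U) (hfz : f z ≠ 0) :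
    DifferentiableAt ℂ (logDeriv f) z :=
  have hA := hf.analyticOnNhd hU
  (hA.deriv z hz).differentiableAt.div (hA z hz).differentiableAt hfz

theorem DifferentiableOn.circleIntegrable_logDeriv {f : ℂ → ℂ} {U : Set ℂ} {c : ℂ} {R : ℝ}
    (hf : DifferentiableOn ℂ f U) (hU : IsOpen U) (hR : 0 ≤ R) (hRU : sphere c R ⊆ U)
    (hf0 : ∀ z ∈ sphere c R, f z ≠ 0) : CircleIntegrable (logDeriv f) c R :=
  ContinuousOn.circleIntegrable hR fun z hz =>
    (hf.differentiableAt_logDeriv hU (hRU hz) (hf0 z hz)).continuousAt.continuousWithinAt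

theorem circleIntegral_logDeriv_eq_of_norm_sub_lt {f g : ℂ → ℂ} {U : Set ℂ} {c : ℂ} {R : ℝ}
    (hR : 0 ≤ R) (hU : IsOpen U) (hRU : sphere c R ⊆ U) (hf : DifferentiableOn ℂ f U)
    (hg : DifferentiableOn ℂ g U) (hlt : ∀ z ∈ sphere c R, ‖g z - f z‖ < ‖f z‖) :
    (∮ z in C(c, R), logDeriv g z) = ∮ z in C(c, R), logDeriv f z := by
  have hf0 : ∀ z ∈ sphere c R, f z ≠ 0 := fun z hz =>
    norm_pos_iff.1 ((norm_nonneg _).trans_lt (hlt z hz))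
  have hg0 : ∀ z ∈ sphere c R, g z ≠ 0 := fun z hz hgz => by simpa [hgz] using hlt z hz
  -- `g / f` maps the circle into the disc `B(1, 1)`, on which `log` is holomorphic
  have hprim : ∀ z ∈ sphere c R,
      HasDerivAt (fun w => log (g w / f w)) (logDeriv g z - logDeriv f z) z := by
    intro z hz
    have hfd := (hf.differentiableAt (hU.mem_nhds (hRU hz))).hasDerivAt
    have hgd := (hg.differentiableAt (hU.mem_nhds (hRU hz))).hasDerivAt
    have hslit : g z / f z ∈ slitPlane := by
      have hnorm : ‖g z / f z - 1‖ < 1 := by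
        rw [div_sub_one (hf0 z hz), norm_div]
        exact (div_lt_one (norm_pos_iff.2 (hf0 z hz))).2 (hlt z hz)
      simpa using mem_slitPlane_of_norm_lt_one hnorm
    convert (hgd.fun_div hfd (hf0 z hz)).clog hslit using 1
    simp only [logDeriv_apply]
    field_simp [hf0 z hz, hg0 z hz]
  rw [← sub_eq_zero, ← circleIntegral.integral_sub (hg.circleIntegrable_logDeriv hU hR hRU hg0)
    (hf.circleIntegrable_logDeriv hU hR hRU hf0)]
  exact circleIntegral.integral_eq_zero_of_hasDerivWithinAt hR fun z hz =>
    (hprim z hz).hasDerivWithinAt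

theorem circleIntegral_logDeriv_eq_zero {f : ℂ → ℂ} {U : Set ℂ} {c : ℂ} {R : ℝ} (hR : 0 ≤ R)
    (hU : IsOpen U) (hRU : closedBall c R ⊆ U) (hf : DifferentiableOn ℂ f U)
    (hf0 : ∀ z ∈ closedBall c R, f z ≠ 0) :
    (∮ z in C(c, R), logDeriv f z) = 0 :=
  have hd : ∀ z ∈ closedBall c R, DifferentiableAt ℂ (logDeriv f) z := fun z hz =>
    hf.differentiableAt_logDeriv hU (hRU hz) (hf0 z hz)
  circleIntegral_eq_zero_of_differentiable_on_off_countable hR countable_empty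
    (fun z hz => (hd z hz).continuousAt.continuousWithinAt)
    (fun z hz => hd z (ball_subset_closedBall hz.1))

theorem circleIntegral_logDeriv_eq_sum_analyticOrderNatAt {f : ℂ → ℂ} {U : Set ℂ} {c : ℂ}
    {R : ℝ} (hR : 0 ≤ R) (hU : IsOpen U) (hRU : closedBall c R ⊆ U)
    (hf : DifferentiableOn ℂ f U) (hsph : ∀ z ∈ sphere c R, f z ≠ 0) (Z : Finset ℂ)
    (hZ : ↑Z ⊆ ball c R) (hord : ∀ z ∈ Z, analyticOrderAt f z ≠ ⊤)
    (hzeros : ∀ z ∈ closedBall c R, f z = 0 → z ∈ Z) :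
    (∮ z in C(c, R), logDeriv f z) =
      2 * π * I * ((∑ z ∈ Z, analyticOrderNatAt f z : ℕ) : ℂ) := by
  induction Z using Finset.induction_on generalizing f with
  | empty =>
    rw [Finset.sum_empty, Nat.cast_zero, mul_zero]
    exact circleIntegral_logDeriv_eq_zero hR hU hRU hf fun z hz h0 => by
      simpa using hzeros z hz h0
  | insert z Z hzZ ih =>
    have hzR : z ∈ ball c R := hZ (Finset.mem_insert_self z Z)
    have hzU : z ∈ U := hRU (ball_subset_closedBall hzR)
    set m := analyticOrderNatAt f z
    obtain ⟨g, hg, hgz, hfg⟩ :=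
      hf.exists_eq_pow_analyticOrderNatAt_mul hU hzU (hord z (Finset.mem_insert_self z Z))
    have hfg_apply : ∀ σ, f σ = (σ - z) ^ m * g σ := fun σ => congrFun hfg σ
    have hsph_g : ∀ σ ∈ sphere c R, g σ ≠ 0 := fun σ hσ h0 =>
      hsph σ hσ (by rw [hfg_apply, h0, mul_zero])
    have hord_g : ∀ w ∈ Z, analyticOrderAt g w = analyticOrderAt f w := by
      intro w hw
      have hwz : w - z ≠ 0 := sub_ne_zero.2 (ne_of_mem_of_not_mem hw hzZ)
      have hwU : w ∈ U := hRU (ball_subset_closedBall (hZ (Finset.mem_insert_of_mem hw)))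
      rw [show f = (fun σ => (σ - z) ^ m) * g from hfg,
        analyticOrderAt_mul (by fun_prop) (hg.analyticOnNhd hU w hwU),
        (analyticOrderAt_eq_zero (f := fun σ => (σ - z) ^ m)).2 (Or.inr (pow_ne_zero _ hwz)),
        zero_add]
    have hint_g := ih hg hsph_g ((Finset.coe_subset.2 (Finset.subset_insert z Z)).trans hZ)
      (fun w hw => hord_g w hw ▸ hord w (Finset.mem_insert_of_mem hw))
      (fun w hw h0 => by
        have hwz : w ≠ z := fun h => hgz (h ▸ h0)
        simpa [hwz] using hzeros w hw (by rw [hfg_apply, h0, mul_zero]))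
    have hσz : ∀ σ ∈ sphere c R, σ - z ≠ 0 := fun σ hσ =>
      sub_ne_zero.2 (sphere_disjoint_ball.ne_of_mem hσ hzR)
    have hlog : ∀ σ ∈ sphere c R, logDeriv f σ = m * (σ - z)⁻¹ + logDeriv g σ := by
      intro σ hσ
      have hgσ : DifferentiableAt ℂ g σ :=
        hg.differentiableAt (hU.mem_nhds (hRU (sphere_subset_closedBall hσ)))
      rw [hfg, logDeriv_mul (f := fun σ => (σ - z) ^ m) σ (pow_ne_zero _ (hσz σ hσ))
        (hsph_g σ hσ) (by fun_prop) hgσ, logDeriv_fun_pow (by fun_prop)]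
      simp [logDeriv_apply, m]
    have hint_pole : CircleIntegrable (fun σ => (m : ℂ) * (σ - z)⁻¹) c R :=
      ContinuousOn.circleIntegrable hR <| continuousOn_const.mul <|
        (continuousOn_id.sub continuousOn_const).inv₀ hσz
    have hnat : ∀ w ∈ Z, analyticOrderNatAt g w = analyticOrderNatAt f w := fun w hw =>
      congrArg ENat.toNat (hord_g w hw)
    rw [Finset.sum_congr rfl hnat] at hint_g
    calc (∮ σ in C(c, R), logDeriv f σ)
        = ∮ σ in C(c, R), ((m : ℂ) * (σ - z)⁻¹ + logDeriv g σ) :=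
          circleIntegral.integral_congr hR hlog
      _ = m * (2 * π * I) + 2 * π * I * ((∑ w ∈ Z, analyticOrderNatAt f w : ℕ) : ℂ) := by
          rw [circleIntegral.integral_add hint_pole (hg.circleIntegrable_logDeriv hU hR
            (sphere_subset_closedBall.trans hRU) hsph_g), circleIntegral.integral_const_mul,
            circleIntegral.integral_sub_inv_of_mem_ball hzR, hint_g]
      _ = 2 * π * I * ((∑ w ∈ insert z Z, analyticOrderNatAt f w : ℕ) : ℂ) := by
          rw [Finset.sum_insert hzZ]
          push_cast
          ring

theorem DifferentiableOn.finite_setOf_eq_zero {f : ℂ → ℂ} {U K : Set ℂ}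
    (hf : DifferentiableOn ℂ f U) (hU : IsOpen U) (hUc : IsConnected U) {w : ℂ} (hw : w ∈ U)
    (hfw : f w ≠ 0) (hK : IsCompact K) (hKU : K ⊆ U) :
    {z ∈ K | f z = 0}.Finite := by
  have hcod := (hf.analyticOnNhd hU).preimage_zero_mem_codiscreteWithin hfw hw hUc
  exact (hK.finite_sdiff_of_mem_codiscreteWithin (codiscreteWithin_mono hKU hcod)).subset
    fun z hz => ⟨hz.1, fun h => h hz.2⟩

theorem isLocallyConstant_circleIntegral_logDeriv {X : Type*} [TopologicalSpace X]
    {q : X → ℂ → ℂ} {U : Set ℂ} {c : ℂ} {R : ℝ} (hR : 0 ≤ R) (hU : IsOpen U)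
    (hRU : sphere c R ⊆ U) (hcont : ContinuousOn (fun p : X × ℂ => q p.1 p.2) (univ ×ˢ U))
    (hholo : ∀ y, DifferentiableOn ℂ (q y) U) (hsph : ∀ y, ∀ z ∈ sphere c R, q y z ≠ 0) :
    IsLocallyConstant fun y => ∮ z in C(c, R), logDeriv (q y) z := by
  refine (IsLocallyConstant.iff_eventually_eq _).2 fun y₁ => ?_
  have hnear : ∀ᶠ y in 𝓝 y₁, ∀ z ∈ sphere c R, ‖q y z - q y₁ z‖ < ‖q y₁ z‖ := by
    refine (isCompact_sphere c R).eventually_forall_of_forall_eventually fun z hz => ?_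
    have hzU : U ∈ 𝓝 z := hU.mem_nhds (hRU hz)
    have hq : ContinuousAt (fun p : X × ℂ => q p.1 p.2) (y₁, z) :=
      hcont.continuousAt (prod_mem_nhds univ_mem hzU)
    have hq₁ : ContinuousAt (fun p : X × ℂ => q y₁ p.2) (y₁, z) :=
      ((hholo y₁).continuousOn.continuousAt hzU).comp continuousAt_snd
    exact (hq.sub hq₁).norm.eventually_lt hq₁.norm (by simpa using hsph y₁ z hz)
  filter_upwards [hnear] with y hy
  exact circleIntegral_logDeriv_eq_of_norm_sub_lt hR hU hRU (hholo y₁) (hholo y) hy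

theorem DifferentiableOn.exists_finset_zeros_circleIntegral_logDeriv {f : ℂ → ℂ} {c : ℂ}
    {R ε : ℝ} (hR : 0 < R) (hRε : R < ε) (hf : DifferentiableOn ℂ f (ball c ε))
    (hsph : ∀ z ∈ sphere c R, f z ≠ 0) (hzeros : {σ ∈ ball c ε | f σ = 0} ⊆ ball c R) :
    ∃ Z : Finset ℂ, (↑Z : Set ℂ) = {σ ∈ ball c ε | f σ = 0} ∧
      (∀ z ∈ Z, ∃ g : ℂ → ℂ, DifferentiableOn ℂ g (ball c ε) ∧ g z ≠ 0 ∧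
        f = fun σ => (σ - z) ^ analyticOrderNatAt f z * g σ) ∧
      (∮ z in C(c, R), logDeriv f z) =
        2 * π * I * ((∑ z ∈ Z, analyticOrderNatAt f z : ℕ) : ℂ) := by
  have hRε' : closedBall c R ⊆ ball c ε := closedBall_subset_ball hRε
  obtain ⟨w, hw⟩ : (sphere c R).Nonempty := NormedSpace.sphere_nonempty.2 hR.le
  have hwε : w ∈ ball c ε := hRε' (sphere_subset_closedBall hw)
  have hord : ∀ z ∈ ball c ε, analyticOrderAt f z ≠ ⊤ := fun z hz =>
    (hf.analyticOnNhd isOpen_ball).analyticOrderAt_ne_top_of_isPreconnected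
      (convex_ball c ε).isPreconnected hwε hz
      (by simp [analyticOrderAt_eq_zero.2 (Or.inr (hsph w hw))])
  have hfin : {σ ∈ ball c ε | f σ = 0}.Finite :=
    (hf.finite_setOf_eq_zero isOpen_ball (isConnected_ball (hR.trans hRε)) hwε (hsph w hw)
      (isCompact_closedBall c R) hRε').subset
      fun σ hσ => ⟨ball_subset_closedBall (hzeros hσ), hσ.2⟩
  refine ⟨hfin.toFinset, hfin.coe_toFinset, fun z hz => ?_, ?_⟩
  · have hzε : z ∈ ball c ε := (hfin.mem_toFinset.1 hz).1
    exact hf.exists_eq_pow_analyticOrderNatAt_mul isOpen_ball hzε (hord z hzε)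
  · exact circleIntegral_logDeriv_eq_sum_analyticOrderNatAt hR.le isOpen_ball hRε' hf hsph _
      (by simpa using hzeros) (fun z hz => hord z (hfin.mem_toFinset.1 hz).1)
      (fun z hz h0 => by simpa using ⟨hRε' hz, h0⟩)

/-- constancy of the number of zeros, counted with multiplicity, of a continuous
family of holomorphic functions nonvanishing on the annulus `ε/2 ≤ |σ-σ₀| ≤ ε`. -/
theorem statement10 {X : Type*} [TopologicalSpace X] [ConnectedSpace X]
    (σ₀ : ℂ) (ε : ℝ) (hε : 0 < ε) (q : X → ℂ → ℂ)
    (hcont : ContinuousOn (fun p : X × ℂ => q p.1 p.2)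
      ((univ : Set X) ×ˢ closedBall σ₀ ε))
    (hholo : ∀ y : X, DifferentiableOn ℂ (q y) (ball σ₀ ε))
    (hne : ∀ y : X, ∀ σ : ℂ, ε / 2 ≤ dist σ σ₀ → dist σ σ₀ ≤ ε → q y σ ≠ 0) :
    ∃ D : ℕ, ∀ y : X, ∃ Z : Finset ℂ,
      (↑Z : Set ℂ) = {σ ∈ ball σ₀ ε | q y σ = 0} ∧
      (↑Z : Set ℂ) ⊆ ball σ₀ (ε / 2) ∧
      ∃ ord : ℂ → ℕ,
        (∀ z ∈ Z, ∃ (ρ : ℝ) (h : ℂ → ℂ), 0 < ρ ∧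
          DifferentiableOn ℂ h (ball z ρ) ∧ h z ≠ 0 ∧
          ∀ σ ∈ ball z ρ ∩ ball σ₀ ε, q y σ = (σ - z) ^ (ord z) * h σ) ∧
        ∑ z ∈ Z, ord z = D := by
  obtain ⟨y₀⟩ := ‹ConnectedSpace X›.toNonempty
  have hsph : ∀ y, ∀ σ ∈ sphere σ₀ (ε / 2), q y σ ≠ 0 := fun y σ hσ =>
    hne y σ (mem_sphere.1 hσ).ge (by linarith [mem_sphere.1 hσ])
  have hzeros : ∀ y, {σ ∈ ball σ₀ ε | q y σ = 0} ⊆ ball σ₀ (ε / 2) := fun y σ hσ =>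
    mem_ball.2 (lt_of_not_ge fun h => hne y σ h (mem_ball.1 hσ.1).le hσ.2)
  choose Z hZ hfactor hcount using fun y => (hholo y).exists_finset_zeros_circleIntegral_logDeriv
    (by positivity) (by linarith) (hsph y) (hzeros y)
  have hconst := (isLocallyConstant_circleIntegral_logDeriv (by positivity) isOpen_ball
    (sphere_subset_closedBall.trans (closedBall_subset_ball (by linarith)))
    (hcont.mono (prod_mono subset_rfl ball_subset_closedBall)) hholo
    hsph).apply_eq_of_preconnectedSpace
  refine ⟨∑ z ∈ Z y₀, analyticOrderNatAt (q y₀) z, fun y =>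
    ⟨Z y, hZ y, hZ y ▸ hzeros y, analyticOrderNatAt (q y), fun z hz => ?_, ?_⟩⟩
  · obtain ⟨g, hg, hgz, hfg⟩ := hfactor y z hz
    obtain ⟨ρ, hρ, hρε⟩ := Metric.isOpen_iff.1 isOpen_ball z
      ((hZ y).subset (Finset.mem_coe.2 hz)).1
    exact ⟨ρ, g, hρ, hg.mono hρε, hgz, fun σ _ => congrFun hfg σ⟩
  · have h := (hcount y).symm.trans ((hconst y y₀).trans (hcount y₀))
    exact_mod_cast mul_left_cancel₀ (by simp [Real.pi_ne_zero]) h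
end
end

section
/- Let E be a complex Banach space, c ∈ ℂ, 0 < R, n ∈ ℕ, and a₁, …, a_n ∈ E. Let f be holomorphic on the punctured disc {z : 0 < |z − c| < R} and suppose that z ↦ f(z) − Σ_{k=1}^n a_k (z − c)^{−k} extends to a holomorphic function on the full disc B(c,R). Then for every r with 0 < r < R and every σ ∈ ℂ with |σ − c| > r, (i/(2π)) ∮_{|ζ−c|=r} f(ζ)/(ζ − σ) dζ = Σ_{k=1}^n a_k (σ − c)^{−k}. -/
open Metric Set Complex

noncomputable section

/-! On the circle `f = g + P` with `P` the principal part. Since `σ` lies outside the disc,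
Cauchy's theorem kills the `g`-term, and each `(ζ - c)⁻ᵏ` contributes `-2πi (σ - c)⁻ᵏ`. -/

open Real

section

variable {E : Type*} [NormedAddCommGroup E] [NormedSpace ℂ E] {c σ : ℂ} {r : ℝ}

lemma circleIntegrable_sub_inv_smul {h : ℂ → E} (hr : 0 ≤ r) (hh : ContinuousOn h (sphere c r))
    (hσ : σ ∉ closedBall c r) : CircleIntegrable (fun ζ => (ζ - σ)⁻¹ • h ζ) c r := by
  refine ContinuousOn.circleIntegrable hr (ContinuousOn.smul ?_ hh)
  exact (continuousOn_id.sub continuousOn_const).inv₀ fun ζ hζ =>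
    sub_ne_zero.2 (ne_of_mem_of_not_mem (sphere_subset_closedBall hζ) hσ)

lemma continuousOn_sub_zpow_smul_sphere (hr : r ≠ 0) (k : ℤ) (v : E) :
    ContinuousOn (fun ζ => (ζ - c) ^ k • v) (sphere c r) :=
  ((continuousOn_id.sub continuousOn_const).zpow₀ k fun _ hζ =>
    Or.inl (sub_ne_zero.2 (ne_of_mem_sphere hζ hr))).smul continuousOn_const

lemma circleIntegral_sub_inv_smul_eq_zero {g : ℂ → E} (hr : 0 ≤ r)
    (hg : DifferentiableOn ℂ g (closedBall c r)) (hσ : σ ∉ closedBall c r) :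
    (∮ ζ in C(c, r), (ζ - σ)⁻¹ • g ζ) = 0 := by
  have hinv : DifferentiableOn ℂ (fun ζ : ℂ => (ζ - σ)⁻¹) (closedBall c r) :=
    (differentiableOn_id.sub_const σ).inv fun ζ hζ => sub_ne_zero.2 (ne_of_mem_of_not_mem hζ hσ)
  exact ((hinv.smul hg).mono closure_ball_subset_closedBall).diffContOnCl.circleIntegral_eq_zero hr

lemma sub_inv_mul_sub_zpow_neg_succ {ζ : ℂ} (hζc : ζ ≠ c) (hζσ : ζ ≠ σ) (hcσ : c ≠ σ) (k : ℕ) :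
    (ζ - σ)⁻¹ * (ζ - c) ^ (-(k + 1 : ℤ)) =
      (c - σ)⁻¹ * ((ζ - c) ^ (-(k + 1 : ℤ)) - (ζ - σ)⁻¹ * (ζ - c) ^ (-(k : ℤ))) := by
  have hζc' : ζ - c ≠ 0 := sub_ne_zero.2 hζc
  have hζσ' : ζ - σ ≠ 0 := sub_ne_zero.2 hζσ
  have hcσ' : c - σ ≠ 0 := sub_ne_zero.2 hcσ
  rw [← Nat.cast_succ, zpow_neg, zpow_neg, zpow_natCast, zpow_natCast, pow_succ]
  field_simp
  ring

-- Partial fractions give a recursion in `k`, started by `∮ (ζ - c)⁻¹ = 2πi` and `∮ (ζ - σ)⁻¹ = 0`.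
lemma circleIntegral_sub_inv_mul_sub_zpow_neg (hr : 0 < r) (hσ : σ ∉ closedBall c r) {k : ℕ}
    (hk : 1 ≤ k) :
    (∮ ζ in C(c, r), (ζ - σ)⁻¹ * (ζ - c) ^ (-(k : ℤ))) =
      -(2 * π * I) * (σ - c) ^ (-(k : ℤ)) := by
  have hcσ : c ≠ σ := fun h => hσ (h ▸ mem_closedBall_self hr.le)
  have hζc : ∀ ζ ∈ sphere c r, ζ ≠ c := fun ζ hζ => ne_of_mem_sphere hζ hr.ne'
  have hζσ : ∀ ζ ∈ sphere c r, ζ ≠ σ := fun ζ hζ =>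
    ne_of_mem_of_not_mem (sphere_subset_closedBall hζ) hσ
  have recursion : ∀ j : ℕ, (∮ ζ in C(c, r), (ζ - σ)⁻¹ * (ζ - c) ^ (-(j + 1 : ℤ))) =
      (c - σ)⁻¹ * ((∮ ζ in C(c, r), (ζ - c) ^ (-(j + 1 : ℤ))) -
        ∮ ζ in C(c, r), (ζ - σ)⁻¹ * (ζ - c) ^ (-(j : ℤ))) := by
    intro j
    have hpow : CircleIntegrable (fun ζ : ℂ => (ζ - c) ^ (-(j + 1 : ℤ))) c r :=
      circleIntegrable_sub_zpow_iff.2 (Or.inr (Or.inr (by simp [hr.ne, abs_of_pos hr])))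
    have hmul : CircleIntegrable (fun ζ : ℂ => (ζ - σ)⁻¹ * (ζ - c) ^ (-(j : ℤ))) c r :=
      circleIntegrable_sub_inv_smul hr.le
        ((continuousOn_id.sub continuousOn_const).zpow₀ _ fun ζ hζ =>
          Or.inl (sub_ne_zero.2 (hζc ζ hζ))) hσ
    rw [circleIntegral.integral_congr hr.le fun ζ hζ =>
        sub_inv_mul_sub_zpow_neg_succ (hζc ζ hζ) (hζσ ζ hζ) hcσ j,
      circleIntegral.integral_const_mul, circleIntegral.integral_sub hpow hmul]
  have hcσ_inv : (c - σ)⁻¹ = -(σ - c)⁻¹ := by rw [← inv_neg, neg_sub]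
  induction k, hk using Nat.le_induction with
  | base =>
    have h0 : (∮ ζ in C(c, r), (ζ - σ)⁻¹ * (ζ - c) ^ (-((0 : ℕ) : ℤ))) = 0 := by
      simpa using circleIntegral_sub_inv_smul_eq_zero (g := fun _ => (1 : ℂ)) hr.le
        (differentiableOn_const 1) hσ
    have h1 : (∮ ζ in C(c, r), (ζ - c) ^ (-((0 : ℕ) + 1 : ℤ))) = 2 * π * I := by
      simpa using circleIntegral.integral_sub_center_inv c hr.ne'
    rw [show (-((1 : ℕ) : ℤ)) = -(((0 : ℕ) : ℤ) + 1) by norm_num, recursion, h0, h1,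
      hcσ_inv]
    simp only [sub_zero, Nat.cast_zero, zero_add, zpow_neg_one]
    ring
  | succ k hk ih =>
    have hpow : (∮ ζ in C(c, r), (ζ - c) ^ (-(k + 1 : ℤ))) = 0 :=
      circleIntegral.integral_sub_zpow_of_ne (by omega) _ _ _
    rw [Nat.cast_succ, recursion, hpow, ih, hcσ_inv, ← Nat.cast_succ, zpow_neg, zpow_neg,
      zpow_natCast, zpow_natCast, pow_succ, mul_inv]
    ring

lemma circleIntegral_sub_inv_smul_principalPart [CompleteSpace E] (hr : 0 < r)
    (hσ : σ ∉ closedBall c r) (n : ℕ) (a : ℕ → E) :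
    (∮ ζ in C(c, r), (ζ - σ)⁻¹ • ∑ k ∈ Finset.Icc 1 n, (ζ - c) ^ (-(k : ℤ)) • a k) =
      (-(2 * π * I)) • ∑ k ∈ Finset.Icc 1 n, (σ - c) ^ (-(k : ℤ)) • a k := by
  simp_rw [Finset.smul_sum]
  rw [circleIntegral.integral_fun_sum
    (f := fun (k : ℕ) ζ => (ζ - σ)⁻¹ • (ζ - c) ^ (-(k : ℤ)) • a k) fun k _ =>
      circleIntegrable_sub_inv_smul hr.le (continuousOn_sub_zpow_smul_sphere hr.ne' _ _) hσ]
  refine Finset.sum_congr rfl fun k hk => ?_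
  simp_rw [smul_smul]
  rw [circleIntegral.integral_smul_const,
    circleIntegral_sub_inv_mul_sub_zpow_neg hr hσ (Finset.mem_Icc.1 hk).1]

end

theorem statement14_general {E : Type*} [NormedAddCommGroup E] [NormedSpace ℂ E] [CompleteSpace E]
    (c : ℂ) (R : ℝ) (n : ℕ) (a : ℕ → E) (f : ℂ → E)
    (hext : ∃ g : ℂ → E, DifferentiableOn ℂ g (ball c R) ∧
      ∀ z ∈ ball c R \ {c},
        g z = f z - ∑ k ∈ Finset.Icc 1 n, ((z - c) ^ (-(k : ℤ))) • a k) :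
    ∀ r : ℝ, 0 < r → r < R → ∀ σ : ℂ, r < dist σ c →
      (Complex.I / (2 * (Real.pi : ℂ))) • (∮ ζ in C(c, r), (ζ - σ)⁻¹ • f ζ)
        = ∑ k ∈ Finset.Icc 1 n, ((σ - c) ^ (-(k : ℤ))) • a k := by
  obtain ⟨g, hg, hgf⟩ := hext
  intro r hr hrR σ hσ
  set P : ℂ → E := fun z => ∑ k ∈ Finset.Icc 1 n, (z - c) ^ (-(k : ℤ)) • a k
  have hσ' : σ ∉ closedBall c r := by simpa using hσ
  have hgr : DifferentiableOn ℂ g (closedBall c r) := hg.mono (closedBall_subset_ball hrR)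
  have hf_eq : EqOn (fun ζ => (ζ - σ)⁻¹ • f ζ) (fun ζ => (ζ - σ)⁻¹ • g ζ + (ζ - σ)⁻¹ • P ζ)
      (sphere c r) := by
    intro ζ hζ
    have hζc : ζ ≠ c := ne_of_mem_sphere hζ hr.ne'
    dsimp only
    rw [← smul_add, hgf ζ ⟨closedBall_subset_ball hrR (sphere_subset_closedBall hζ), hζc⟩]
    simp only [P, sub_add_cancel]
  have hPr : ContinuousOn P (sphere c r) :=
    continuousOn_finsetSum _ fun k _ => continuousOn_sub_zpow_smul_sphere hr.ne' _ _
  rw [circleIntegral.integral_congr hr.le hf_eq, circleIntegral.integral_add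
      (circleIntegrable_sub_inv_smul hr.le (hgr.continuousOn.mono sphere_subset_closedBall) hσ')
      (circleIntegrable_sub_inv_smul hr.le hPr hσ'),
    circleIntegral_sub_inv_smul_eq_zero hr.le hgr hσ', zero_add,
    circleIntegral_sub_inv_smul_principalPart hr hσ', smul_smul]
  have hπ : (π : ℂ) ≠ 0 := ofReal_ne_zero.2 pi_ne_zero
  rw [show I / (2 * π) * -(2 * π * I) = 1 by field_simp; rw [I_sq]; ring, one_smul]

/-- the Cauchy-type integral `(i/2π) ∮_{|ζ-c|=r} f(ζ)/(ζ-σ) dζ` recovers the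
principal part of `f` at `c`, for `|σ - c| > r`. -/
theorem statement14 {E : Type*} [NormedAddCommGroup E] [NormedSpace ℂ E] [CompleteSpace E]
    (c : ℂ) (R : ℝ) (hR : 0 < R) (n : ℕ) (a : ℕ → E) (f : ℂ → E)
    (hf : DifferentiableOn ℂ f (ball c R \ {c}))
    (hext : ∃ g : ℂ → E, DifferentiableOn ℂ g (ball c R) ∧
      ∀ z ∈ ball c R \ {c},
        g z = f z - ∑ k ∈ Finset.Icc 1 n, ((z - c) ^ (-(k : ℤ))) • a k) :
    ∀ r : ℝ, 0 < r → r < R → ∀ σ : ℂ, r < dist σ c →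
      (Complex.I / (2 * (Real.pi : ℂ))) • (∮ ζ in C(c, r), (ζ - σ)⁻¹ • f ζ)
        = ∑ k ∈ Finset.Icc 1 n, ((σ - c) ^ (-(k : ℤ))) • a k :=
  statement14_general c R n a f hext
end
end

section
/- Let n ≥ 1, let a ∈ Matrix n n ℂ be Hermitian (aᴴ = a), and let σ ∈ ℂ. There exists a twice differentiable function φ : ℝ → ℂⁿ, not identically zero, satisfying φ''(x) = a·φ(x) + σ²·φ(x) for all x ∈ ℝ and φ(0) = φ(π) = 0, if and only if there exist k ∈ ℕ with k ≥ 1 and an eigenvalue μ of a (i.e. a·v = μ·v for some nonzero v ∈ ℂⁿ) such that μ + σ² + k² = 0. -/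
/-!
If `a v = μ v`, then `x ↦ sin (k x) • v` solves the problem whenever `μ + σ² = -k²`.
Conversely, pair a nontrivial solution `φ` with an eigenvector `v` of the Hermitian matrix `a`
that is not orthogonal to it (one exists since the eigenvectors form a basis); then
`ψ = ⟪v, φ⟫` is a nontrivial solution of the scalar problem `ψ'' = (μ + σ²) ψ`,
`ψ(0) = ψ(π) = 0`. By uniqueness for linear ODEs, `ψ` is a multiple of `sin (w x)` with
`w² = -(μ + σ²)` (or of `x` if `w = 0`), and `sin (w π) = 0` forces `w ∈ ℤ`.
-/

open Complex Matrix

variable {E : Type*} [NormedAddCommGroup E] [NormedSpace ℂ E]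

theorem eq_of_hasDerivAt_second_order_linear (l : ℂ) {f f' g g' : ℝ → E}
    (hf : ∀ t, HasDerivAt f (f' t) t) (hf' : ∀ t, HasDerivAt f' (l • f t) t)
    (hg : ∀ t, HasDerivAt g (g' t) t) (hg' : ∀ t, HasDerivAt g' (l • g t) t)
    {t₀ : ℝ} (h₀ : f t₀ = g t₀) (h₀' : f' t₀ = g' t₀) : f = g := by
  let L : E × E →L[ℂ] E × E :=
    (ContinuousLinearMap.snd ℂ E E).prod (l • ContinuousLinearMap.fst ℂ E E)
  have hpair := ODE_solution_unique_univ (v := fun _ => L) (s := fun _ => Set.univ) (t₀ := t₀)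
    (f := fun t => (f t, f' t)) (g := fun t => (g t, g' t))
    (fun _ => L.lipschitz.lipschitzOnWith) (fun t => ⟨(hf t).prodMk (hf' t), trivial⟩)
    (fun t => ⟨(hg t).prodMk (hg' t), trivial⟩) (Prod.ext h₀ h₀')
  exact funext fun t => congrArg Prod.fst (congrFun hpair t)

theorem hasDerivAt_sin_mul_ofReal (w : ℂ) (t : ℝ) :
    HasDerivAt (fun s : ℝ => sin (w * s)) (w * cos (w * t)) t := by
  simpa [mul_comm] using (((hasDerivAt_id (t : ℂ)).const_mul w).csin).comp_ofReal

theorem hasDerivAt_cos_mul_ofReal (w : ℂ) (t : ℝ) :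
    HasDerivAt (fun s : ℝ => cos (w * s)) (-(w * sin (w * t))) t := by
  simpa [mul_comm] using (((hasDerivAt_id (t : ℂ)).const_mul w).ccos).comp_ofReal

theorem hasDerivAt_mul_cos_mul_ofReal (w : ℂ) (t : ℝ) :
    HasDerivAt (fun s : ℝ => w * cos (w * s)) (-w ^ 2 * sin (w * t)) t := by
  simpa [sq, mul_assoc] using (hasDerivAt_cos_mul_ofReal w t).const_mul w

theorem hasDerivAt_sin_mul_ofReal_smul (w : ℂ) (v : E) (t : ℝ) :
    HasDerivAt (fun s : ℝ => sin (w * s) • v) ((w * cos (w * t)) • v) t :=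
  (hasDerivAt_sin_mul_ofReal w t).smul_const v

theorem hasDerivAt_deriv_sin_mul_ofReal_smul (w : ℂ) (v : E) (t : ℝ) :
    HasDerivAt (deriv fun s : ℝ => sin (w * s) • v) ((-w ^ 2 * sin (w * t)) • v) t := by
  rw [funext fun s => (hasDerivAt_sin_mul_ofReal_smul w v s).deriv]
  exact (hasDerivAt_mul_cos_mul_ofReal w t).smul_const v

theorem exists_nat_eq_neg_sq_of_dirichlet {l : ℂ} {ψ ψ' : ℝ → ℂ}
    (hψ : ∀ t, HasDerivAt ψ (ψ' t) t) (hψ' : ∀ t, HasDerivAt ψ' (l * ψ t) t)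
    (h0 : ψ 0 = 0) (hπ : ψ Real.pi = 0) (hne : ψ ≠ 0) :
    ∃ k : ℕ, 1 ≤ k ∧ l + (k : ℂ) ^ 2 = 0 := by
  set c := ψ' 0
  have hc : c ≠ 0 := fun hc => hne <|
    eq_of_hasDerivAt_second_order_linear l hψ hψ' (fun t => hasDerivAt_const t 0)
      (fun t => by simpa using hasDerivAt_const t (0 : ℂ)) h0 hc
  obtain ⟨w, hw⟩ := IsAlgClosed.exists_pow_nat_eq (-l) two_pos
  replace hw : l = -w ^ 2 := by rw [hw, neg_neg]
  subst hw
  rcases eq_or_ne w 0 with rfl | hw0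
  · have hlin := eq_of_hasDerivAt_second_order_linear _ hψ hψ' (g' := fun _ => c)
      (fun t => by simpa using (hasDerivAt_id (t : ℂ)).comp_ofReal.const_mul c)
      (fun t => by simpa using hasDerivAt_const t c) (t₀ := 0) (by simpa using h0) rfl
    have hcπ := congrFun hlin Real.pi
    simp [hπ, hc] at hcπ
  · have hsin := eq_of_hasDerivAt_second_order_linear _ hψ hψ'
      (fun t => (hasDerivAt_sin_mul_ofReal w t).const_mul (c / w))
      (fun t => ((hasDerivAt_mul_cos_mul_ofReal w t).const_mul (c / w)).congr_deriv
        (by rw [smul_eq_mul]; ring)) (t₀ := 0) (by simpa using h0) (by simp [c, hw0])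
    obtain ⟨m, hm⟩ : ∃ m : ℤ, w * Real.pi = m * Real.pi := by
      simpa [hπ, hc, hw0, Complex.sin_eq_zero_iff] using (congrFun hsin Real.pi).symm
    have hwm : w = m := mul_right_cancel₀ (ofReal_ne_zero.mpr Real.pi_ne_zero) hm
    refine ⟨m.natAbs, Int.natAbs_pos.mpr (by rintro rfl; simp_all), ?_⟩
    have hsq : ((m.natAbs : ℂ)) ^ 2 = (m : ℂ) ^ 2 := by
      rw [← Int.cast_natCast, ← Int.cast_pow, Int.natAbs_sq, Int.cast_pow]
    rw [hwm, hsq, neg_add_cancel]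

theorem HasDerivAt.const_dotProduct {𝕜 𝕜' ι : Type*} [NontriviallyNormedField 𝕜]
    [NormedField 𝕜'] [NormedAlgebra 𝕜 𝕜'] [Fintype ι] {φ : 𝕜 → ι → 𝕜'} {φ' : ι → 𝕜'}
    {x : 𝕜} (hφ : HasDerivAt φ φ' x) (w : ι → 𝕜') :
    HasDerivAt (fun t => w ⬝ᵥ φ t) (w ⬝ᵥ φ') x := by
  simp only [dotProduct]
  exact HasDerivAt.fun_sum fun i _ => ((hasDerivAt_pi.mp hφ) i).const_mul (w i)

namespace Matrix.IsHermitian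

variable {𝕜 ι : Type*} [RCLike 𝕜] [Fintype ι] {A : Matrix ι ι 𝕜}

theorem exists_eigenvector_star_dotProduct_ne_zero [DecidableEq ι] (hA : A.IsHermitian)
    {u : ι → 𝕜} (hu : u ≠ 0) :
    ∃ (μ : ℝ) (v : ι → 𝕜), v ≠ 0 ∧ A *ᵥ v = (μ : 𝕜) • v ∧ star v ⬝ᵥ u ≠ 0 := by
  set B := hA.eigenvectorBasis
  obtain ⟨i, hi⟩ : ∃ i, inner 𝕜 (B i) (WithLp.toLp 2 u) ≠ 0 := by
    by_contra! h
    have hrepr := B.sum_repr' (WithLp.toLp 2 u)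
    simp only [h, zero_smul, Finset.sum_const_zero] at hrepr
    exact hu (congrArg WithLp.ofLp hrepr).symm
  refine ⟨hA.eigenvalues i, B i,
    fun h => B.orthonormal.ne_zero i (by ext j; exact congrFun h j), ?_, ?_⟩
  · rw [hA.mulVec_eigenvectorBasis i]
    exact RCLike.real_smul_eq_coe_smul (K := 𝕜) _ _
  · simpa [EuclideanSpace.inner_eq_star_dotProduct, dotProduct_comm] using hi

theorem star_dotProduct_mulVec_of_mulVec_eq (hA : A.IsHermitian) {μ : ℝ} {v : ι → 𝕜}
    (hv : A *ᵥ v = (μ : 𝕜) • v) (u : ι → 𝕜) :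
    star v ⬝ᵥ (A *ᵥ u) = μ * (star v ⬝ᵥ u) := by
  have hleft : star v ᵥ* A = (μ : 𝕜) • star v := by
    rw [← hA.eq, vecMul_conjTranspose, star_star, hv, star_smul, RCLike.star_def,
      RCLike.conj_ofReal]
  rw [dotProduct_mulVec, hleft, smul_dotProduct, smul_eq_mul]

end Matrix.IsHermitian

theorem statement17_general (n : ℕ) (a : Matrix (Fin n) (Fin n) ℂ)
    (ha : a.conjTranspose = a) (σ : ℂ) :
    (∃ φ : ℝ → (Fin n → ℂ), Differentiable ℝ φ ∧ Differentiable ℝ (deriv φ) ∧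
      (∀ x : ℝ, deriv (deriv φ) x = a.mulVec (φ x) + σ ^ 2 • φ x) ∧
      (∃ x : ℝ, φ x ≠ 0) ∧ φ 0 = 0 ∧ φ Real.pi = 0)
    ↔ ∃ (k : ℕ) (μ : ℂ), 1 ≤ k ∧ (∃ v : Fin n → ℂ, v ≠ 0 ∧ a.mulVec v = μ • v) ∧
      μ + σ ^ 2 + (k : ℂ) ^ 2 = 0 := by
  constructor
  · rintro ⟨φ, hφ, hφ', hode, ⟨x₀, hx₀⟩, h0, hπ⟩
    obtain ⟨μ, v, hv, hav, hvx₀⟩ := IsHermitian.exists_eigenvector_star_dotProduct_ne_zero ha hx₀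
    have hψ' (t : ℝ) : HasDerivAt (fun s => star v ⬝ᵥ deriv φ s)
        ((μ + σ ^ 2) * (star v ⬝ᵥ φ t)) t := by
      refine ((hφ' t).hasDerivAt.const_dotProduct (star v)).congr_deriv ?_
      rw [hode, dotProduct_add, IsHermitian.star_dotProduct_mulVec_of_mulVec_eq ha hav,
        dotProduct_smul, smul_eq_mul, add_mul]
      simp only [RCLike.ofReal_eq_complex_ofReal]
    obtain ⟨k, hk, hkl⟩ := exists_nat_eq_neg_sq_of_dirichlet
      (fun t => (hφ t).hasDerivAt.const_dotProduct (star v)) hψ' (by simp [h0]) (by simp [hπ])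
      (fun h => hvx₀ (congrFun h x₀))
    exact ⟨k, μ, hk, ⟨v, hv, hav⟩, by linear_combination hkl⟩
  · rintro ⟨k, μ, hk, ⟨v, hv, hav⟩, hμ⟩
    have hk0 : (k : ℂ) ≠ 0 := Nat.cast_ne_zero.mpr (by omega)
    have hπk : (k : ℂ) * (Real.pi / (2 * k)) = Real.pi / 2 := by field_simp
    refine ⟨fun t => sin (k * t) • v,
      fun t => (hasDerivAt_sin_mul_ofReal_smul _ v t).differentiableAt,
      fun t => (hasDerivAt_deriv_sin_mul_ofReal_smul _ v t).differentiableAt,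
      fun t => ?_, ⟨Real.pi / (2 * k), by simpa [hπk] using hv⟩, by simp, ?_⟩
    · rw [(hasDerivAt_deriv_sin_mul_ofReal_smul _ v t).deriv, mulVec_smul, hav, smul_smul,
        smul_smul, ← add_smul]
      congr 1
      linear_combination (-sin (k * t)) * hμ
    · simp [← ofReal_natCast, ← ofReal_mul, ← ofReal_sin, Real.sin_nat_mul_pi k]

/-- the Dirichlet problem `φ'' = (a + σ²)φ` on `[0,π]` for a Hermitian matrix
`a` has a nontrivial solution iff `μ + σ² + k² = 0` for some eigenvalue `μ` of `a` and some
integer `k ≥ 1`. -/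
theorem statement17 (n : ℕ) (hn : 1 ≤ n) (a : Matrix (Fin n) (Fin n) ℂ)
    (ha : a.conjTranspose = a) (σ : ℂ) :
    (∃ φ : ℝ → (Fin n → ℂ), Differentiable ℝ φ ∧ Differentiable ℝ (deriv φ) ∧
      (∀ x : ℝ, deriv (deriv φ) x = a.mulVec (φ x) + σ ^ 2 • φ x) ∧
      (∃ x : ℝ, φ x ≠ 0) ∧ φ 0 = 0 ∧ φ Real.pi = 0)
    ↔ ∃ (k : ℕ) (μ : ℂ), 1 ≤ k ∧ (∃ v : Fin n → ℂ, v ≠ 0 ∧ a.mulVec v = μ • v) ∧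
      μ + σ ^ 2 + (k : ℂ) ^ 2 = 0 :=
  statement17_general n a ha σ
end
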